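/- arXiv:2111.07615 — 9 statements merged into one kernel-verified Lean document; each statement's English description precedes it below -/
import Mathlib

section
/- For every δ' ∈ (0,1) and every integer K ≥ 1, with probability at least 1 − δ' the following holds simultaneously for all k ∈ {1,…,K}: S_k ≤ E[τ] + L + √(2·E[τ]·L), where L = log(π²K²/(6δ')) and log denotes the natural logarithm. -/
/-!
For fixed `k`, `S_k` is a sum of independent indicators `1{k ≤ i + τ_i}`, and their means add up
to at most `E[τ]`: for each value `n` of `τ`, at most `n` indices `i < k` satisfy `k ≤ i + n`.
By convexity, the moment generating function of a `[0, 1]`-valued variable is dominated by that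
of a Bernoulli variable with the same mean, so the Chernoff bound at Bennett's point
`t = log (1 + u / m)`, together with `log (1 + x) ≥ 2x / (x + 2)`, gives Bernstein's tail
`exp (-u² / (2m + u))`, which equals `exp (-L)` at `u = L + √(2mL)`. A union bound over `k ≤ K`,
with `exp (-L) = 6δ' / (π²K²)`, loses at most `δ'`.
-/

open MeasureTheory ProbabilityTheory Real Finset

lemma Real.exp_mul_le_one_add_mul {x : ℝ} (hx : x ∈ Set.Icc (0 : ℝ) 1) (t : ℝ) :
    exp (t * x) ≤ 1 + (exp t - 1) * x := by
  have h := convexOn_exp.2 (Set.mem_univ 0) (Set.mem_univ t) (sub_nonneg.2 hx.2) hx.1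
    (sub_add_cancel 1 x)
  simp only [smul_eq_mul, mul_zero, zero_add, exp_zero, mul_one] at h
  rw [mul_comm x t] at h
  linarith

lemma card_filter_Ico_le_add_le (a k n : ℕ) : #{i ∈ Ico a k | k ≤ i + n} ≤ n := by
  calc #{i ∈ Ico a k | k ≤ i + n} ≤ #(Ico (k - n) k) :=
        card_le_card fun i hi => by simp only [mem_filter, mem_Ico] at hi ⊢; omega
    _ ≤ n := by simp only [Nat.card_Ico]; omega

lemma natCast_mul_exp_neg_log_le {δ : ℝ} (hδ : 0 < δ) (K : ℕ) :
    K * exp (-log (π ^ 2 * K ^ 2 / (6 * δ))) ≤ δ := by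
  rcases K.eq_zero_or_pos with rfl | hK
  · simpa using hδ.le
  have hK1 : (1 : ℝ) ≤ K := by exact_mod_cast hK
  have hKK : (K : ℝ) ≤ K ^ 2 := by nlinarith
  have hπ : 9 < π ^ 2 := by nlinarith [pi_gt_three]
  rw [exp_neg, exp_log (by positivity), inv_div, ← mul_div_assoc, div_le_iff₀ (by positivity)]
  nlinarith [mul_le_mul_of_nonneg_left hKK hδ.le,
    mul_lt_mul_of_pos_left hπ (by positivity : 0 < δ * K ^ 2)]

namespace MeasureTheory

variable {Ω ι : Type*} [MeasurableSpace Ω] {μ : Measure Ω} [IsProbabilityMeasure μ]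

lemma sum_integral_ite_le_integral {σ : Ω → ℕ} (hσ : Measurable σ)
    (hint : Integrable (fun ω => (σ ω : ℝ)) μ) (a k : ℕ) :
    ∑ i ∈ Ico a k, ∫ ω, (if k ≤ i + σ ω then (1 : ℝ) else 0) ∂μ ≤ ∫ ω, (σ ω : ℝ) ∂μ := by
  have h_int (i : ℕ) : Integrable (fun ω => if k ≤ i + σ ω then (1 : ℝ) else 0) μ := by
    have h_ind : Measurable fun n : ℕ => if k ≤ i + n then (1 : ℝ) else 0 := measurable_from_top
    exact .of_mem_Icc 0 1 (h_ind.comp hσ).aemeasurable (.of_forall fun ω => by split_ifs <;> simp)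
  rw [← integral_finsetSum _ fun i _ => h_int i]
  refine integral_mono (integrable_finsetSum _ fun i _ => h_int i) hint fun ω => ?_
  rw [sum_boole]
  exact_mod_cast card_filter_Ico_le_add_le a k (σ ω)

lemma one_sub_card_mul_le_measure_setOf_forall {s : Finset ι} {P : ι → Ω → Prop}
    {ε : ENNReal} (h : ∀ i ∈ s, μ {ω | ¬ P i ω} ≤ ε) :
    1 - #s * ε ≤ μ {ω | ∀ i ∈ s, P i ω} := by
  set A := {ω | ∀ i ∈ s, P i ω}
  have h_compl : μ Aᶜ ≤ #s * ε :=
    calc μ Aᶜ = μ (⋃ i ∈ s, {ω | ¬ P i ω}) := by congr 1; ext; simp [A]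
      _ ≤ ∑ i ∈ s, μ {ω | ¬ P i ω} := measure_biUnion_finset_le _ _
      _ ≤ ∑ i ∈ s, ε := sum_le_sum h
      _ = #s * ε := by rw [sum_const, nsmul_eq_mul]
  have h_univ : 1 ≤ μ A + μ Aᶜ := by
    rw [← measure_univ (μ := μ), ← Set.union_compl_self A]
    exact measure_union_le _ _
  calc 1 - #s * ε ≤ 1 - μ Aᶜ := by gcongr
    _ ≤ μ A := tsub_le_iff_right.2 h_univ

end MeasureTheory

namespace ProbabilityTheory

variable {Ω ι : Type*} [MeasurableSpace Ω] {μ : Measure Ω} [IsProbabilityMeasure μ]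

lemma mgf_le_exp_of_mem_Icc {X : Ω → ℝ} (hX : AEMeasurable X μ)
    (hX01 : ∀ ω, X ω ∈ Set.Icc (0 : ℝ) 1) (t : ℝ) :
    mgf X μ t ≤ exp ((exp t - 1) * μ[X]) := by
  have hXint : Integrable X μ := .of_mem_Icc 0 1 hX (.of_forall hX01)
  calc mgf X μ t = ∫ ω, exp (t * X ω) ∂μ := rfl
    _ ≤ ∫ ω, (1 + (exp t - 1) * X ω) ∂μ :=
      integral_mono_of_nonneg (.of_forall fun _ => (exp_pos _).le)
        ((integrable_const 1).add (hXint.const_mul _))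
        (.of_forall fun ω => exp_mul_le_one_add_mul (hX01 ω) t)
    _ = (exp t - 1) * μ[X] + 1 := by
      rw [integral_add (integrable_const 1) (hXint.const_mul _), integral_const_mul]
      simp [add_comm]
    _ ≤ exp ((exp t - 1) * μ[X]) := add_one_le_exp _

variable {X : ι → Ω → ℝ} {s : Finset ι} {m : ℝ}

lemma measureReal_le_sum_le_exp_of_mem_Icc (h_indep : iIndepFun X μ)
    (h_meas : ∀ i, Measurable (X i)) (hX01 : ∀ i ω, X i ω ∈ Set.Icc (0 : ℝ) 1)
    (hm : ∑ i ∈ s, μ[X i] ≤ m) {t : ℝ} (ht : 0 ≤ t) (a : ℝ) :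
    μ.real {ω | a ≤ ∑ i ∈ s, X i ω} ≤ exp (-t * a + (exp t - 1) * m) := by
  have h_int : Integrable (fun ω => exp (t * (∑ i ∈ s, X i) ω)) μ :=
    h_indep.integrable_exp_mul_sum h_meas fun i _ =>
      .of_mem_Icc 0 (exp t) (by fun_prop) (.of_forall fun ω =>
        ⟨(exp_pos _).le, exp_le_exp.2 (mul_le_of_le_one_right ht (hX01 i ω).2)⟩)
  have h_mgf : mgf (∑ i ∈ s, X i) μ t ≤ exp ((exp t - 1) * m) :=
    calc mgf (∑ i ∈ s, X i) μ t = ∏ i ∈ s, mgf (X i) μ t := h_indep.mgf_sum h_meas s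
      _ ≤ ∏ i ∈ s, exp ((exp t - 1) * μ[X i]) :=
        prod_le_prod (fun _ _ => mgf_nonneg) fun i _ =>
          mgf_le_exp_of_mem_Icc (h_meas i).aemeasurable (hX01 i) t
      _ = exp ((exp t - 1) * ∑ i ∈ s, μ[X i]) := by rw [mul_sum, exp_sum]
      _ ≤ exp ((exp t - 1) * m) :=
        exp_le_exp.2 (mul_le_mul_of_nonneg_left hm (by linarith [add_one_le_exp t]))
  calc μ.real {ω | a ≤ ∑ i ∈ s, X i ω} = μ.real {ω | a ≤ (∑ i ∈ s, X i) ω} := by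
        simp only [Finset.sum_apply]
    _ ≤ exp (-t * a) * mgf (∑ i ∈ s, X i) μ t := measure_ge_le_exp_mul_mgf a ht h_int
    _ ≤ exp (-t * a) * exp ((exp t - 1) * m) := by gcongr
    _ = exp (-t * a + (exp t - 1) * m) := (exp_add _ _).symm

lemma measureReal_add_le_sum_le_exp_of_mem_Icc (h_indep : iIndepFun X μ)
    (h_meas : ∀ i, Measurable (X i)) (hX01 : ∀ i ω, X i ω ∈ Set.Icc (0 : ℝ) 1)
    (hm : ∑ i ∈ s, μ[X i] ≤ m) {u : ℝ} (hu : 0 < u) :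
    μ.real {ω | m + u ≤ ∑ i ∈ s, X i ω} ≤ exp (-(u ^ 2 / (2 * m + u))) := by
  have hm0 : 0 ≤ m := (sum_nonneg fun i _ => integral_nonneg fun ω => (hX01 i ω).1).trans hm
  rcases hm0.eq_or_lt with rfl | hm_pos
  · refine (measureReal_le_sum_le_exp_of_mem_Icc h_indep h_meas hX01 hm zero_le_one _).trans_eq ?_
    congr 1
    field_simp
    ring
  · have hx : 0 < u / m := div_pos hu hm_pos
    refine (measureReal_le_sum_le_exp_of_mem_Icc h_indep h_meas hX01 hm
      (log_nonneg (by linarith : 1 ≤ 1 + u / m)) _).trans (exp_le_exp.2 ?_)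
    rw [exp_log (by linarith)]
    have hlog := mul_le_mul_of_nonneg_right (le_log_one_add_of_nonneg hx.le)
      (by linarith : 0 ≤ m + u)
    have h_lhs : 2 * (u / m) / (u / m + 2) * (m + u) = u + u ^ 2 / (2 * m + u) := by
      field_simp
      ring
    have h_lin : (1 + u / m - 1) * m = u := by field_simp; ring
    linarith

lemma measureReal_add_add_sqrt_le_sum_le_exp_neg (h_indep : iIndepFun X μ)
    (h_meas : ∀ i, Measurable (X i)) (hX01 : ∀ i ω, X i ω ∈ Set.Icc (0 : ℝ) 1)
    (hm : ∑ i ∈ s, μ[X i] ≤ m) (L : ℝ) :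
    μ.real {ω | m + L + √(2 * m * L) ≤ ∑ i ∈ s, X i ω} ≤ exp (-L) := by
  rcases le_or_gt L 0 with hL | hL
  · exact measureReal_le_one.trans (one_le_exp (neg_nonneg.2 hL))
  have hm0 : 0 ≤ m := (sum_nonneg fun i _ => integral_nonneg fun ω => (hX01 i ω).1).trans hm
  have hu : 0 < L + √(2 * m * L) := by positivity
  rw [add_assoc]
  refine (measureReal_add_le_sum_le_exp_of_mem_Icc h_indep h_meas hX01 hm hu).trans
    (exp_le_exp.2 (neg_le_neg ?_))
  rw [le_div_iff₀ (by positivity)]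
  nlinarith [sq_sqrt (by positivity : 0 ≤ 2 * m * L), sqrt_nonneg (2 * m * L)]

/-- The paper's `S_k`. -/
def missingEpisodes (τ : ℕ → Ω → ℕ) (k : ℕ) (ω : Ω) : ℝ :=
  ∑ i ∈ Ico 1 k, if k ≤ i + τ i ω then 1 else 0

lemma measure_lt_missingEpisodes_le {τ : ℕ → Ω → ℕ} (hmeas : ∀ i, Measurable (τ i))
    (hindep : iIndepFun τ μ) (hident : ∀ i, IdentDistrib (τ i) (τ 1) μ μ)
    (hint : Integrable (fun ω => (τ 1 ω : ℝ)) μ) (k : ℕ) (L : ℝ) :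
    μ {ω | (∫ ω', (τ 1 ω' : ℝ) ∂μ) + L + √(2 * (∫ ω', (τ 1 ω' : ℝ) ∂μ) * L)
      < missingEpisodes τ k ω} ≤ ENNReal.ofReal (exp (-L)) := by
  set m := ∫ ω, (τ 1 ω : ℝ) ∂μ
  set X : ℕ → Ω → ℝ := fun i ω => if k ≤ i + τ i ω then 1 else 0
  have h_ind (i : ℕ) : Measurable fun n : ℕ => if k ≤ i + n then (1 : ℝ) else 0 :=
    measurable_from_top
  have h_mean : ∑ i ∈ Ico 1 k, μ[X i] ≤ m :=
    calc ∑ i ∈ Ico 1 k, μ[X i]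
        = ∑ i ∈ Ico 1 k, ∫ ω, (if k ≤ i + τ 1 ω then (1 : ℝ) else 0) ∂μ :=
          sum_congr rfl fun i _ => ((hident i).comp (h_ind i)).integral_eq
      _ ≤ m := sum_integral_ite_le_integral (hmeas 1) hint 1 k
  have h_tail := measureReal_add_add_sqrt_le_sum_le_exp_neg (X := X) (hindep.comp _ h_ind)
    (fun i => (h_ind i).comp (hmeas i)) (fun i ω => by simp only [X]; split_ifs <;> simp)
    h_mean L
  refine (measure_mono (Set.ofPred_subset_ofPred.2 fun _ h => h.le)).trans ?_
  rwa [← ofReal_measureReal, ENNReal.ofReal_le_ofReal_iff (exp_pos _).le]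

end ProbabilityTheory

theorem stmt_2_general {Ω : Type*} [MeasurableSpace Ω] (μ : Measure Ω) [IsProbabilityMeasure μ]
    (τ : ℕ → Ω → ℕ) (hmeas : ∀ i, Measurable (τ i))
    (hindep : iIndepFun τ μ)
    (hident : ∀ i, IdentDistrib (τ i) (τ 1) μ μ)
    (hint : Integrable (fun ω => (τ 1 ω : ℝ)) μ)
    (δ' : ℝ) (hδ0 : 0 < δ') (K : ℕ) :
    ENNReal.ofReal (1 - δ') ≤
      μ {ω | ∀ k ∈ Finset.Icc 1 K,
        (∑ i ∈ Finset.Ico 1 k, if k ≤ i + τ i ω then (1 : ℝ) else 0)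
          ≤ (∫ ω', (τ 1 ω' : ℝ) ∂μ) + Real.log (π ^ 2 * K ^ 2 / (6 * δ'))
            + Real.sqrt (2 * (∫ ω', (τ 1 ω' : ℝ) ∂μ)
                * Real.log (π ^ 2 * K ^ 2 / (6 * δ')))} := by
  set m := ∫ ω, (τ 1 ω : ℝ) ∂μ
  set L := log (π ^ 2 * K ^ 2 / (6 * δ'))
  have h_tail (k : ℕ) (_ : k ∈ Icc 1 K) :
      μ {ω | ¬ missingEpisodes τ k ω ≤ m + L + √(2 * m * L)} ≤ ENNReal.ofReal (exp (-L)) :=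
    (measure_mono fun ω => not_le.1).trans
      (measure_lt_missingEpisodes_le hmeas hindep hident hint k L)
  calc ENNReal.ofReal (1 - δ') = 1 - ENNReal.ofReal δ' := by
        rw [ENNReal.ofReal_sub _ hδ0.le, ENNReal.ofReal_one]
    _ ≤ 1 - #(Icc 1 K) * ENNReal.ofReal (exp (-L)) := by
        gcongr
        rw [Nat.card_Icc, add_tsub_cancel_right, ← ENNReal.ofReal_natCast,
          ← ENNReal.ofReal_mul (Nat.cast_nonneg K)]
        exact ENNReal.ofReal_le_ofReal (natCast_mul_exp_neg_log_le hδ0 K)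
    _ ≤ _ := one_sub_card_mul_le_measure_setOf_forall h_tail

/-- Let `τ_1, τ_2, …` be i.i.d. ℕ-valued random variables with finite expectation `E[τ]`, and
for `k ≥ 1` let `S_k = ∑_{i=1}^{k−1} 1{i + τ_i ≥ k}`. For every `δ' ∈ (0,1)` and `K ≥ 1`,
with probability at least `1 − δ'`, simultaneously for all `k ∈ {1,…,K}`:
`S_k ≤ E[τ] + L + √(2·E[τ]·L)`, where `L = log(π²K²/(6δ'))`. -/
theorem stmt_2 {Ω : Type*} [MeasurableSpace Ω] (μ : Measure Ω) [IsProbabilityMeasure μ]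
    (τ : ℕ → Ω → ℕ) (hmeas : ∀ i, Measurable (τ i))
    (hindep : iIndepFun τ μ)
    (hident : ∀ i, IdentDistrib (τ i) (τ 1) μ μ)
    (hint : Integrable (fun ω => (τ 1 ω : ℝ)) μ)
    (δ' : ℝ) (hδ0 : 0 < δ') (hδ1 : δ' < 1) (K : ℕ) (hK : 1 ≤ K) :
    ENNReal.ofReal (1 - δ') ≤
      μ {ω | ∀ k ∈ Finset.Icc 1 K,
        (∑ i ∈ Finset.Ico 1 k, if k ≤ i + τ i ω then (1 : ℝ) else 0)
          ≤ (∫ ω', (τ 1 ω' : ℝ) ∂μ) + Real.log (π ^ 2 * K ^ 2 / (6 * δ'))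
            + Real.sqrt (2 * (∫ ω', (τ 1 ω' : ℝ) ∂μ)
                * Real.log (π ^ 2 * K ^ 2 / (6 * δ')))} :=
  stmt_2_general μ τ hmeas hindep hident hint δ' hδ0 K
end

section
/- Σ_{k=1}^{n} 1/max{1, N_k} ≤ M·log(8n), where log denotes the natural logarithm. -/
/-!
Split the sum according to the value `v = x k`. On the fibre of `v`, listed in increasing
order, `N_k` runs through `0, 1, …, m - 1` where `m ≤ n` is the size of the fibre, so the fibre
contributes `1 + H_{m-1} ≤ 2 + log m ≤ log 8 + log n`, using `log 8 = 3 log 2 > 2`.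
-/

open Finset

theorem Finset.sum_card_filter_lt_eq_sum_range {α β : Type*} [LinearOrder α]
    [AddCommMonoid β] (s : Finset α) (g : ℕ → β) :
    ∑ k ∈ s, g #{i ∈ s | i < k} = ∑ j ∈ range #s, g j := by
  induction s using Finset.induction_on_max with
  | empty => simp
  | insert a s hlt ih =>
    have ha : a ∉ s := fun h => lt_irrefl a (hlt a h)
    have hfilter_a : {i ∈ insert a s | i < a} = s := by
      rw [filter_insert, if_neg (lt_irrefl a), filter_true_of_mem hlt]
    have hfilter_s : ∀ k ∈ s, {i ∈ insert a s | i < k} = {i ∈ s | i < k} := fun k hk => by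
      rw [filter_insert, if_neg (not_lt.mpr (hlt k hk).le)]
    rw [sum_insert ha, hfilter_a, sum_congr rfl fun k hk => by rw [hfilter_s k hk], ih,
      card_insert_of_notMem ha, sum_range_succ, add_comm]

lemma Real.two_lt_log_eight : 2 < Real.log 8 := by
  rw [show (8 : ℝ) = 2 ^ 3 by norm_num, Real.log_pow]
  have := Real.log_two_gt_d9
  push_cast
  linarith

lemma Real.log_natCast_le_log_natCast {m n : ℕ} (h : m ≤ n) :
    Real.log m ≤ Real.log n := by
  rcases Nat.eq_zero_or_pos m with rfl | hm
  · simpa using Real.log_natCast_nonneg n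
  · exact Real.log_le_log (by exact_mod_cast hm) (by exact_mod_cast h)

lemma sum_range_one_div_max_one_le_log (m : ℕ) :
    ∑ j ∈ range m, 1 / max 1 (j : ℝ) ≤ Real.log (8 * m) := by
  rcases m with _ | t
  · simp
  have hsum : ∑ j ∈ range (t + 1), 1 / max 1 (j : ℝ) = 1 + (harmonic t : ℝ) := by
    rw [sum_range_succ', harmonic, Rat.cast_sum]
    push_cast
    rw [add_comm]
    congr 1
    · norm_num
    · exact sum_congr rfl fun i _ => by
        rw [max_eq_right (by linarith [i.cast_nonneg (α := ℝ)]), one_div, add_comm]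
  rw [hsum, Real.log_mul (by norm_num) (by positivity)]
  linarith [harmonic_le_one_add_log t, Real.two_lt_log_eight,
    Real.log_natCast_le_log_natCast t.le_succ]

lemma filter_Ico_eq_filter_fibre_lt {X : Type*} [DecidableEq X] (x : ℕ → X) {k n : ℕ}
    (hk : k ≤ n) :
    {i ∈ Ico 1 k | x i = x k} = {i ∈ {j ∈ Icc 1 n | x j = x k} | i < k} := by
  ext i
  simp only [mem_filter, mem_Ico, mem_Icc]
  grind

lemma sum_fibre_one_div_max_one_le_log {X : Type*} [DecidableEq X] (x : ℕ → X) (n : ℕ)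
    (v : X) :
    ∑ k ∈ Icc 1 n with x k = v, 1 / max 1 (#{i ∈ Ico 1 k | x i = x k} : ℝ)
      ≤ Real.log (8 * n) := by
  set S := {k ∈ Icc 1 n | x k = v}
  have hprev : ∀ k ∈ S, {i ∈ Ico 1 k | x i = x k} = {i ∈ S | i < k} := by
    intro k hk
    obtain ⟨hkn, rfl⟩ := mem_filter.mp hk
    exact filter_Ico_eq_filter_fibre_lt x (mem_Icc.mp hkn).2
  have hS : #S ≤ n := (card_filter_le _ _).trans (by simp)
  calc ∑ k ∈ S, 1 / max 1 (#{i ∈ Ico 1 k | x i = x k} : ℝ)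
      = ∑ k ∈ S, 1 / max 1 (#{i ∈ S | i < k} : ℝ) :=
        sum_congr rfl fun k hk => by rw [hprev k hk]
    _ = ∑ j ∈ range #S, 1 / max 1 (j : ℝ) :=
        S.sum_card_filter_lt_eq_sum_range fun j => 1 / max 1 (j : ℝ)
    _ ≤ Real.log (8 * #S) := sum_range_one_div_max_one_le_log _
    _ ≤ Real.log (8 * n) := by
        exact_mod_cast Real.log_natCast_le_log_natCast (Nat.mul_le_mul_left 8 hS)

theorem stmt_6_general {X : Type*} [Fintype X] [DecidableEq X]
    (M : ℕ) (hM : Fintype.card X = M) (n : ℕ) (x : ℕ → X) :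
    ∑ k ∈ Finset.Icc 1 n,
      1 / max 1 ((((Finset.Ico 1 k).filter (fun i => x i = x k)).card : ℝ))
      ≤ M * Real.log (8 * n) := by
  subst hM
  calc _ = ∑ v : X, ∑ k ∈ Icc 1 n with x k = v,
        1 / max 1 (#{i ∈ Ico 1 k | x i = x k} : ℝ) := (sum_fiberwise _ x _).symm
    _ ≤ ∑ _v : X, Real.log (8 * n) :=
        sum_le_sum fun v _ => sum_fibre_one_div_max_one_le_log x n v
    _ = Fintype.card X * Real.log (8 * n) := by simp

/-- Let `X` be a finite nonempty type with `|X| = M`, `n ≥ 1`, and `x_1, …, x_n` a sequence in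
`X`. With `N_k = #{i : 1 ≤ i < k, x_i = x_k}`, we have
`∑_{k=1}^{n} 1/(max 1 N_k) ≤ M·log(8·n)`. -/
theorem stmt_6 {X : Type*} [Fintype X] [Nonempty X] [DecidableEq X]
    (M : ℕ) (hM : Fintype.card X = M) (n : ℕ) (hn : 1 ≤ n) (x : ℕ → X) :
    ∑ k ∈ Finset.Icc 1 n,
      1 / max 1 ((((Finset.Ico 1 k).filter (fun i => x i = x k)).card : ℝ))
      ≤ M * Real.log (8 * n) :=
  stmt_6_general M hM n x
end

section
/- If there is a real number ψ ≥ 1 such that S_k ≤ ψ for every k ∈ {1,…,K}, then Σ_{k=1}^{K} Σ_{h=1}^{H} 1/√(max{1, N'_{kh}(s_h^k, a_h^k)}) ≤ 4·√(H·S·A·T) + 3·H·S·A·ψ. -/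
open Finset

lemma sum_one_div_sqrt_le (n : ℕ) :
    ∑ j ∈ range n, 1 / Real.sqrt ((j : ℝ) + 1) ≤ 2 * Real.sqrt n := by
  induction n with
  | zero => simp
  | succ n ih =>
    rw [Finset.sum_range_succ]
    have key : Real.sqrt n * Real.sqrt ((n : ℝ) + 1) ≤ (n : ℝ) + 1 / 2 := by
      rw [← Real.sqrt_mul (by positivity)]
      calc Real.sqrt ((n : ℝ) * ((n : ℝ) + 1)) ≤ Real.sqrt (((n : ℝ) + 1 / 2) ^ 2) :=
            Real.sqrt_le_sqrt (by nlinarith)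
        _ = (n : ℝ) + 1 / 2 := Real.sqrt_sq (by positivity)
    have hpos : 0 < Real.sqrt ((n : ℝ) + 1) := Real.sqrt_pos.2 (by positivity)
    have hsq : Real.sqrt ((n : ℝ) + 1) * Real.sqrt ((n : ℝ) + 1) = (n : ℝ) + 1 :=
      Real.mul_self_sqrt (by positivity)
    have h1 : 1 / Real.sqrt ((n : ℝ) + 1) ≤ 2 * Real.sqrt ((n : ℝ) + 1) - 2 * Real.sqrt n := by
      rw [div_le_iff₀ hpos]
      nlinarith
    push_cast
    linarith

lemma sum_rank_le (V : Finset ℕ) (g : ℕ → ℝ) (hg : ∀ j, 0 ≤ g j) :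
    ∑ k ∈ V, g ((V.filter (fun i => i < k)).card) ≤ ∑ j ∈ range V.card, g j := by
  classical
  set r : ℕ → ℕ := fun k => (V.filter (fun i => i < k)).card with hr
  have hmono : ∀ x ∈ V, ∀ y ∈ V, x < y → r x < r y := by
    intro x hx y hy hxy
    apply Finset.card_lt_card
    constructor
    · intro i hi
      simp only [mem_filter] at hi ⊢
      exact ⟨hi.1, hi.2.trans hxy⟩
    · intro hsub
      have hx' : x ∈ V.filter (fun i => i < y) := by simp [mem_filter, hx, hxy]
      have := hsub hx'
      simp [mem_filter] at this
  have hinj : ∀ x ∈ V, ∀ y ∈ V, r x = r y → x = y := by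
    intro x hx y hy hxy
    by_contra hne
    rcases lt_or_gt_of_ne hne with h | h
    · exact absurd hxy (Nat.ne_of_lt (hmono x hx y hy h))
    · exact absurd hxy.symm (Nat.ne_of_lt (hmono y hy x hx h))
  rw [← Finset.sum_image hinj]
  apply Finset.sum_le_sum_of_subset_of_nonneg
  · intro j hj
    simp only [Finset.mem_image] at hj
    obtain ⟨k, hk, rfl⟩ := hj
    rw [Finset.mem_range]
    apply Finset.card_lt_card
    constructor
    · exact Finset.filter_subset _ _
    · intro hsub
      have := hsub hk
      simp [mem_filter] at this
  · intro j _ _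
    exact hg j

lemma sum_f_le (ψ : ℝ) (hψ : 1 ≤ ψ) (n : ℕ) :
    ∑ j ∈ range n, (if (j : ℝ) ≤ 2 * ψ then (1 : ℝ) else 2 / Real.sqrt ((j : ℝ) + 1))
      ≤ 3 * ψ + 4 * Real.sqrt n := by
  have h1 : ∀ j : ℕ,
      (if (j : ℝ) ≤ 2 * ψ then (1 : ℝ) else 2 / Real.sqrt ((j : ℝ) + 1))
        ≤ (if (j : ℝ) ≤ 2 * ψ then (1 : ℝ) else 0) + 2 * (1 / Real.sqrt ((j : ℝ) + 1)) := by
    intro j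
    by_cases hj : (j : ℝ) ≤ 2 * ψ
    · simp only [hj, if_pos]
      have : 0 ≤ 1 / Real.sqrt ((j : ℝ) + 1) := by positivity
      linarith
    · rw [if_neg hj, if_neg hj, zero_add, mul_one_div]
  have hcard : (((range n).filter (fun j : ℕ => (j : ℝ) ≤ 2 * ψ)).card : ℝ) ≤ 3 * ψ := by
    have hsub : (range n).filter (fun j : ℕ => (j : ℝ) ≤ 2 * ψ) ⊆ range (⌊2 * ψ⌋₊ + 1) := by
      intro j hj
      simp only [mem_filter, mem_range] at hj ⊢
      have := Nat.le_floor hj.2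
      omega
    have h2 : (((range n).filter (fun j : ℕ => (j : ℝ) ≤ 2 * ψ)).card : ℝ) ≤ (⌊2 * ψ⌋₊ : ℝ) + 1 := by
      have := Finset.card_le_card hsub
      rw [Finset.card_range] at this
      exact_mod_cast this
    have h3 : (⌊2 * ψ⌋₊ : ℝ) ≤ 2 * ψ := Nat.floor_le (by linarith)
    linarith
  calc ∑ j ∈ range n, (if (j : ℝ) ≤ 2 * ψ then (1 : ℝ) else 2 / Real.sqrt ((j : ℝ) + 1))
      ≤ ∑ j ∈ range n,
          ((if (j : ℝ) ≤ 2 * ψ then (1 : ℝ) else 0) + 2 * (1 / Real.sqrt ((j : ℝ) + 1))) :=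
        Finset.sum_le_sum fun j _ => h1 j
    _ = (((range n).filter (fun j : ℕ => (j : ℝ) ≤ 2 * ψ)).card : ℝ)
          + 2 * ∑ j ∈ range n, 1 / Real.sqrt ((j : ℝ) + 1) := by
        rw [Finset.sum_add_distrib, Finset.sum_boole, Finset.mul_sum]
    _ ≤ 3 * ψ + 2 * (2 * Real.sqrt n) := by
        have := sum_one_div_sqrt_le n
        have h2 : 2 * ∑ j ∈ range n, 1 / Real.sqrt ((j : ℝ) + 1) ≤ 2 * (2 * Real.sqrt n) := by
          linarith
        linarith
    _ = 3 * ψ + 4 * Real.sqrt n := by ring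

lemma sum_sqrt_card_le {ι : Type*} (t : Finset ι) (c : ι → ℕ) :
    ∑ x ∈ t, Real.sqrt (c x) ≤ Real.sqrt ((t.card : ℝ) * ∑ x ∈ t, (c x : ℝ)) := by
  have h := sq_sum_le_card_mul_sum_sq (s := t) (f := fun x => Real.sqrt (c x))
  have h2 : ∑ x ∈ t, Real.sqrt (c x) ^ 2 = ∑ x ∈ t, (c x : ℝ) := by
    apply Finset.sum_congr rfl
    intro x _
    exact Real.sq_sqrt (by positivity)
  rw [h2] at h
  have h3 : (0 : ℝ) ≤ ∑ x ∈ t, Real.sqrt (c x) :=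
    Finset.sum_nonneg fun x _ => Real.sqrt_nonneg _
  calc ∑ x ∈ t, Real.sqrt (c x) = Real.sqrt ((∑ x ∈ t, Real.sqrt (c x)) ^ 2) :=
        (Real.sqrt_sq h3).symm
    _ ≤ Real.sqrt ((t.card : ℝ) * ∑ x ∈ t, (c x : ℝ)) := Real.sqrt_le_sqrt h

/-- Consider `K ≥ 1` episodes of horizon `H ≥ 1` over finite state/action sets of sizes `S`,
`A`, with `T = K·H`, visited pairs `(s_h^k, a_h^k)`, delays `τ_k`, observed counters
`N'_{kh}(s,a) = #{i : 1 ≤ i < k, (s_h^i, a_h^i) = (s,a), i + τ_i < k}` and missing-episode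
counts `S_k = #{i : 1 ≤ i < k, i + τ_i ≥ k}`. If `ψ ≥ 1` satisfies `S_k ≤ ψ` for all
`k ∈ {1,…,K}`, then
`∑_{k=1}^{K} ∑_{h=1}^{H} 1/√(max 1 N'_{kh}(s_h^k, a_h^k)) ≤ 4·√(H·S·A·T) + 3·H·S·A·ψ`. -/
theorem stmt_7 {𝒮 𝒜 : Type*} [Fintype 𝒮] [Fintype 𝒜] [Nonempty 𝒮] [Nonempty 𝒜]
    [DecidableEq 𝒮] [DecidableEq 𝒜]
    (S A K H T : ℕ) (hS : Fintype.card 𝒮 = S) (hA : Fintype.card 𝒜 = A)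
    (hK : 1 ≤ K) (hH : 1 ≤ H) (hT : T = K * H)
    (s : ℕ → ℕ → 𝒮) (a : ℕ → ℕ → 𝒜) (τ : ℕ → ℕ)
    (N' : ℕ → ℕ → 𝒮 → 𝒜 → ℕ)
    (hN' : ∀ k h st ac, N' k h st ac =
      ((Finset.Ico 1 k).filter (fun i => s i h = st ∧ a i h = ac ∧ i + τ i < k)).card)
    (ψ : ℝ) (hψ : 1 ≤ ψ)
    (hSk : ∀ k ∈ Finset.Icc 1 K,
      ((((Finset.Ico 1 k).filter (fun i => k ≤ i + τ i)).card : ℝ)) ≤ ψ) :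
    ∑ k ∈ Finset.Icc 1 K, ∑ h ∈ Finset.Icc 1 H,
        1 / Real.sqrt (max 1 ((N' k h (s k h) (a k h) : ℝ)))
      ≤ 4 * Real.sqrt (H * S * A * T) + 3 * H * S * A * ψ := by
  classical
  set f : ℕ → ℝ := fun j => if (j : ℝ) ≤ 2 * ψ then (1 : ℝ) else 2 / Real.sqrt ((j : ℝ) + 1)
    with hfdef
  have hf0 : ∀ j, 0 ≤ f j := by
    intro j
    simp only [hfdef]
    by_cases hj : (j : ℝ) ≤ 2 * ψ
    · simp [hj]
    · simp only [hj, if_neg, not_false_iff]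
      positivity
  -- fiber sets
  set V : ℕ → 𝒮 × 𝒜 → Finset ℕ :=
    fun h p => (Finset.Icc 1 K).filter (fun k => (s k h, a k h) = p) with hVdef
  -- key fiber bound
  have key : ∀ h ∈ Finset.Icc 1 H, ∀ p : 𝒮 × 𝒜,
      ∑ k ∈ V h p, 1 / Real.sqrt (max 1 ((N' k h (s k h) (a k h) : ℝ)))
        ≤ 3 * ψ + 4 * Real.sqrt ((V h p).card) := by
    intro h _ p
    obtain ⟨st, ac⟩ := p
    have hpoint : ∀ k ∈ V h (st, ac),
        1 / Real.sqrt (max 1 ((N' k h (s k h) (a k h) : ℝ)))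
          ≤ f (((V h (st, ac)).filter (fun i => i < k)).card) := by
      intro k hk
      simp only [hVdef, mem_filter, Finset.mem_Icc, Prod.mk.injEq] at hk
      obtain ⟨⟨hk1, hk2⟩, hks, hka⟩ := hk
      set c : ℕ := ((V h (st, ac)).filter (fun i => i < k)).card with hcdef
      -- rank equals full count
      have hrankeq : (V h (st, ac)).filter (fun i => i < k)
          = (Finset.Ico 1 k).filter (fun i => s i h = st ∧ a i h = ac) := by
        ext i
        simp only [hVdef, mem_filter, Finset.mem_Icc, Finset.mem_Ico, Prod.mk.injEq]
        constructor
        · rintro ⟨⟨⟨h1, _⟩, h3, h4⟩, h5⟩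
          exact ⟨⟨h1, h5⟩, h3, h4⟩
        · rintro ⟨⟨h1, h2⟩, h3, h4⟩
          exact ⟨⟨⟨h1, le_trans (Nat.le_of_lt h2) hk2⟩, h3, h4⟩, h2⟩
      -- c ≤ N' + S_k
      have hsub : (Finset.Ico 1 k).filter (fun i => s i h = st ∧ a i h = ac)
          ⊆ ((Finset.Ico 1 k).filter (fun i => s i h = st ∧ a i h = ac ∧ i + τ i < k))
            ∪ ((Finset.Ico 1 k).filter (fun i => k ≤ i + τ i)) := by
        intro i hi
        simp only [mem_filter, Finset.mem_Ico, Finset.mem_union] at hi ⊢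
        by_cases hd : i + τ i < k
        · exact Or.inl ⟨hi.1, hi.2.1, hi.2.2, hd⟩
        · exact Or.inr ⟨hi.1, by omega⟩
      have hcle : c ≤ N' k h st ac + ((Finset.Ico 1 k).filter (fun i => k ≤ i + τ i)).card := by
        rw [hcdef, hrankeq, hN']
        exact le_trans (Finset.card_le_card hsub) (Finset.card_union_le _ _)
      have hSkk : (((Finset.Ico 1 k).filter (fun i => k ≤ i + τ i)).card : ℝ) ≤ ψ :=
        hSk k (Finset.mem_Icc.2 ⟨hk1, hk2⟩)
      have hcleR : (c : ℝ) ≤ (N' k h st ac : ℝ) + ψ := by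
        have : (c : ℝ) ≤ (N' k h st ac : ℝ)
            + (((Finset.Ico 1 k).filter (fun i => k ≤ i + τ i)).card : ℝ) := by
          exact_mod_cast hcle
        linarith
      rw [hks, hka]
      by_cases hc : (c : ℝ) ≤ 2 * ψ
      · simp only [hfdef, hc, if_pos]
        have h1le : (1 : ℝ) ≤ Real.sqrt (max 1 ((N' k h st ac : ℝ))) := by
          have h0 := Real.sqrt_le_sqrt (le_max_left (1 : ℝ) ((N' k h st ac : ℝ)))
          rwa [Real.sqrt_one] at h0
        rw [div_le_one (by linarith)]
        exact h1le
      · simp only [hfdef, hc, if_neg, not_false_iff]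
        push_neg at hc
        have hmax : (c : ℝ) + 1 ≤ 4 * max 1 ((N' k h st ac : ℝ)) := by
          have h4 : (N' k h st ac : ℝ) ≤ max 1 ((N' k h st ac : ℝ)) := le_max_right _ _
          have : (c : ℝ) - ψ ≤ (N' k h st ac : ℝ) := by linarith
          nlinarith [le_max_left (1 : ℝ) ((N' k h st ac : ℝ))]
        have hXpos : (0 : ℝ) < Real.sqrt (max 1 ((N' k h st ac : ℝ))) :=
          Real.sqrt_pos.2 (lt_of_lt_of_le one_pos (le_max_left _ _))
        have hYpos : (0 : ℝ) < Real.sqrt ((c : ℝ) + 1) := Real.sqrt_pos.2 (by positivity)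
        rw [div_le_div_iff₀ hXpos hYpos]
        have : Real.sqrt ((c : ℝ) + 1) ≤ 2 * Real.sqrt (max 1 ((N' k h st ac : ℝ))) := by
          have h4eq : (2 : ℝ) * Real.sqrt (max 1 ((N' k h st ac : ℝ)))
              = Real.sqrt (4 * max 1 ((N' k h st ac : ℝ))) := by
            rw [Real.sqrt_mul (by norm_num : (0:ℝ) ≤ 4),
              show Real.sqrt 4 = 2 by
                rw [show (4 : ℝ) = 2 ^ 2 by norm_num, Real.sqrt_sq (by norm_num)]]
          rw [h4eq]
          exact Real.sqrt_le_sqrt hmax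
        linarith
    calc ∑ k ∈ V h (st, ac), 1 / Real.sqrt (max 1 ((N' k h (s k h) (a k h) : ℝ)))
        ≤ ∑ k ∈ V h (st, ac), f (((V h (st, ac)).filter (fun i => i < k)).card) :=
          Finset.sum_le_sum hpoint
      _ ≤ ∑ j ∈ range (V h (st, ac)).card, f j := sum_rank_le (V h (st, ac)) f hf0
      _ ≤ 3 * ψ + 4 * Real.sqrt ((V h (st, ac)).card) := sum_f_le ψ hψ _
  -- sum of fiber cards per h
  have hfibcard : ∀ h, ∑ p : 𝒮 × 𝒜, ((V h p).card : ℝ) = (K : ℝ) := by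
    intro h
    have := Finset.card_eq_sum_card_fiberwise
      (f := fun k => (s k h, a k h)) (s := Finset.Icc 1 K) (t := Finset.univ)
      (fun x _ => Finset.mem_univ _)
    have h2 : (Finset.Icc 1 K).card = K := by rw [Nat.card_Icc]; omega
    rw [h2] at this
    exact_mod_cast this.symm
  -- split constant part
  have hsplit : ∀ h : ℕ, ∑ p : 𝒮 × 𝒜, (3 * ψ + 4 * Real.sqrt ((V h p).card))
      = (S : ℝ) * (A : ℝ) * (3 * ψ) + 4 * ∑ p : 𝒮 × 𝒜, Real.sqrt ((V h p).card) := by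
    intro h
    rw [Finset.sum_add_distrib, Finset.sum_const, ← Finset.mul_sum, Finset.card_univ,
      Fintype.card_prod, hS, hA, nsmul_eq_mul]
    push_cast
    ring
  have hIccH : (Finset.Icc 1 H).card = H := by rw [Nat.card_Icc]; omega
  -- sqrt double sum bound
  have hsq : ∑ h ∈ Finset.Icc 1 H, ∑ p : 𝒮 × 𝒜, Real.sqrt ((V h p).card)
      ≤ Real.sqrt ((H : ℝ) * (S : ℝ) * (A : ℝ) * (T : ℝ)) := by
    have h1 : ∑ h ∈ Finset.Icc 1 H, ∑ p : 𝒮 × 𝒜, Real.sqrt ((V h p).card)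
        = ∑ q ∈ (Finset.Icc 1 H) ×ˢ (Finset.univ : Finset (𝒮 × 𝒜)),
            Real.sqrt ((V q.1 q.2).card) := (Finset.sum_product' _ _ _).symm
    rw [h1]
    refine (sum_sqrt_card_le _ _).trans (le_of_eq ?_)
    congr 1
    have h4 : ∑ q ∈ (Finset.Icc 1 H) ×ˢ (Finset.univ : Finset (𝒮 × 𝒜)),
        ((V q.1 q.2).card : ℝ) = ∑ h ∈ Finset.Icc 1 H, ∑ p : 𝒮 × 𝒜, ((V h p).card : ℝ) :=
      Finset.sum_product' (f := fun h p => ((V h p).card : ℝ)) _ _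
    have h3 : ∑ h ∈ Finset.Icc 1 H, ∑ p : 𝒮 × 𝒜, ((V h p).card : ℝ)
        = (H : ℝ) * (K : ℝ) := by
      rw [Finset.sum_congr rfl (fun h _ => hfibcard h), Finset.sum_const, hIccH,
        nsmul_eq_mul]
    rw [Finset.card_product, Finset.card_univ, Fintype.card_prod, hS, hA, hIccH, h4, h3]
    subst hT
    push_cast
    ring
  -- assemble
  calc ∑ k ∈ Finset.Icc 1 K, ∑ h ∈ Finset.Icc 1 H,
        1 / Real.sqrt (max 1 ((N' k h (s k h) (a k h) : ℝ)))
      = ∑ h ∈ Finset.Icc 1 H, ∑ p : 𝒮 × 𝒜, ∑ k ∈ V h p,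
          1 / Real.sqrt (max 1 ((N' k h (s k h) (a k h) : ℝ))) := by
        rw [Finset.sum_comm]
        exact Finset.sum_congr rfl fun h _ =>
          (Finset.sum_fiberwise (Finset.Icc 1 K) (fun k => (s k h, a k h)) _).symm
    _ ≤ ∑ h ∈ Finset.Icc 1 H, ∑ p : 𝒮 × 𝒜, (3 * ψ + 4 * Real.sqrt ((V h p).card)) :=
        Finset.sum_le_sum fun h hh => Finset.sum_le_sum fun p _ => key h hh p
    _ = (H : ℝ) * ((S : ℝ) * (A : ℝ) * (3 * ψ))
          + 4 * ∑ h ∈ Finset.Icc 1 H, ∑ p : 𝒮 × 𝒜, Real.sqrt ((V h p).card) := by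
        rw [Finset.sum_congr rfl (fun h _ => hsplit h), Finset.sum_add_distrib,
          Finset.sum_const, hIccH, nsmul_eq_mul, ← Finset.mul_sum]
    _ ≤ (H : ℝ) * ((S : ℝ) * (A : ℝ) * (3 * ψ))
          + 4 * Real.sqrt ((H : ℝ) * (S : ℝ) * (A : ℝ) * (T : ℝ)) := by linarith
    _ = 4 * Real.sqrt ((H : ℝ) * (S : ℝ) * (A : ℝ) * (T : ℝ))
          + 3 * (H : ℝ) * (S : ℝ) * (A : ℝ) * ψ := by ring
end

section
/- If there is a real number ψ ≥ 1 such that S_k ≤ ψ for every k ∈ {1,…,K}, then Σ_{k=1}^{K} Σ_{h=1}^{H} 1/max{1, N'_{kh}(s_h^k, a_h^k)} ≤ 2·H·S·A·log(8T) + H·S·A·ψ·log(16ψ). -/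
open Finset in
lemma harm8 (N : ℕ) : ∑ i ∈ Finset.range N, (1:ℝ)/(i+2) ≤ Real.log (N+1) := by
  induction N with
  | zero => simp
  | succ n ih =>
    rw [Finset.sum_range_succ]
    have h1 : (0:ℝ) < (n:ℝ)+1 := by positivity
    have h2 : (0:ℝ) < (n:ℝ)+2 := by positivity
    have key : (1:ℝ)/((n:ℝ)+2) ≤ Real.log ((n:ℝ)+2) - Real.log ((n:ℝ)+1) := by
      have h3 := Real.log_le_sub_one_of_pos (show (0:ℝ) < ((n:ℝ)+1)/((n:ℝ)+2) by positivity)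
      rw [Real.log_div (by positivity) (by positivity)] at h3
      have h4 : ((n:ℝ)+1)/((n:ℝ)+2) - 1 = -(1/((n:ℝ)+2)) := by field_simp; ring
      linarith
    push_cast
    have hE : ((n:ℝ)+1+1) = (n:ℝ)+2 := by ring
    rw [hE]
    linarith

lemma sumg8 (m K : ℕ) (hK : 1 ≤ K) :
    ∑ n ∈ Finset.range K, 1 / max 1 ((n:ℝ) - m) ≤ (m:ℝ) + 2 + Real.log K := by
  have hlog : (0:ℝ) ≤ Real.log K := Real.log_nonneg (by exact_mod_cast hK)
  have hone : ∀ n : ℕ, 1 / max 1 ((n:ℝ) - m) ≤ 1 := by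
    intro n
    rw [div_le_one (lt_of_lt_of_le one_pos (le_max_left _ _))]
    exact le_max_left _ _
  by_cases h : K ≤ m + 2
  · calc ∑ n ∈ Finset.range K, 1 / max 1 ((n:ℝ) - m)
        ≤ ∑ _n ∈ Finset.range K, (1:ℝ) := Finset.sum_le_sum fun n _ => hone n
      _ = (K:ℝ) := by simp
      _ ≤ (m:ℝ) + 2 + Real.log K := by
          have : (K:ℝ) ≤ (m:ℝ) + 2 := by exact_mod_cast h
          linarith
  · push_neg at h
    rw [Finset.range_eq_Ico, ← Finset.sum_Ico_consecutive _ (Nat.zero_le (m+2)) h.le]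
    have hfirst : ∑ n ∈ Finset.Ico 0 (m+2), 1 / max 1 ((n:ℝ) - m) ≤ (m:ℝ) + 2 := by
      calc ∑ n ∈ Finset.Ico 0 (m+2), 1 / max 1 ((n:ℝ) - m)
          ≤ ∑ _n ∈ Finset.Ico 0 (m+2), (1:ℝ) := Finset.sum_le_sum fun n _ => hone n
        _ = ((m:ℝ)+2) := by simp
    have hsecond : ∑ n ∈ Finset.Ico (m+2) K, 1 / max 1 ((n:ℝ) - m) ≤ Real.log K := by
      have heq : ∑ n ∈ Finset.Ico (m+2) K, 1 / max 1 ((n:ℝ) - m)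
          = ∑ i ∈ Finset.range (K - (m+2)), (1:ℝ)/(i+2) := by
        rw [Finset.sum_Ico_eq_sum_range]
        apply Finset.sum_congr rfl
        intro i _
        have h2 : ((m+2+i:ℕ):ℝ) - (m:ℝ) = (i:ℝ) + 2 := by push_cast; ring
        rw [h2, max_eq_right (by nlinarith [Nat.cast_nonneg (α := ℝ) i])]
      rw [heq]
      calc ∑ i ∈ Finset.range (K - (m+2)), (1:ℝ)/(i+2)
          ≤ Real.log ((K - (m+2) : ℕ) + 1) := harm8 _
        _ ≤ Real.log K := by
            apply Real.log_le_log (by positivity)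
            have : K - (m+2) + 1 ≤ K := by omega
            exact_mod_cast this
    linarith

lemma log_ge_two_of_ge (x : ℝ) (hx : 8 ≤ x) : (2:ℝ) ≤ Real.log x := by
  rw [Real.le_log_iff_exp_le (by linarith)]
  have h1 := Real.exp_one_lt_d9
  have h2 : Real.exp 2 = Real.exp 1 * Real.exp 1 := by
    rw [← Real.exp_add]; norm_num
  nlinarith [Real.exp_pos 1]

lemma final8 (K H S A T : ℕ) (ψ : ℝ) (hψ : 1 ≤ ψ) (hK : 1 ≤ K) (hH : 1 ≤ H)
    (hS : 1 ≤ S) (hA : 1 ≤ A) (hT : T = K * H) :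
    (H:ℝ) * ((S:ℝ) * A * (((Nat.ceil ψ : ℕ):ℝ) + 2 + Real.log K))
      ≤ 2 * H * S * A * Real.log (8 * T) + H * S * A * ψ * Real.log (16 * ψ) := by
  have hK1 : (1:ℝ) ≤ (K:ℝ) := by exact_mod_cast hK
  have hlogK : (0:ℝ) ≤ Real.log K := Real.log_nonneg hK1
  have hKT : (K:ℝ) ≤ (T:ℝ) := by
    have : K ≤ T := by rw [hT]; exact Nat.le_mul_of_pos_right K hH
    exact_mod_cast this
  have hceil : ((Nat.ceil ψ : ℕ):ℝ) ≤ ψ + 1 := by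
    have := Nat.ceil_lt_add_one (show (0:ℝ) ≤ ψ by linarith)
    linarith
  have hlog8T : Real.log K + 2 ≤ Real.log (8 * T) := by
    have h1 : Real.log (8 * (K:ℝ)) ≤ Real.log (8 * T) :=
      Real.log_le_log (by linarith) (by linarith)
    have h2 : Real.log (8 * (K:ℝ)) = Real.log 8 + Real.log K :=
      Real.log_mul (by norm_num) (by linarith)
    have h3 : (2:ℝ) ≤ Real.log 8 := log_ge_two_of_ge 8 le_rfl
    linarith
  have hlog16 : (2:ℝ) ≤ Real.log (16 * ψ) := log_ge_two_of_ge _ (by linarith)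
  have hkey : ((Nat.ceil ψ : ℕ):ℝ) + 2 + Real.log K
      ≤ 2 * Real.log (8 * T) + ψ * Real.log (16 * ψ) := by
    have h4 : 2 * ψ ≤ ψ * Real.log (16 * ψ) := by nlinarith
    nlinarith
  have hHSA : (0:ℝ) ≤ (H:ℝ) * S * A := by positivity
  calc (H:ℝ) * ((S:ℝ) * A * (((Nat.ceil ψ : ℕ):ℝ) + 2 + Real.log K))
      = ((H:ℝ) * S * A) * (((Nat.ceil ψ : ℕ):ℝ) + 2 + Real.log K) := by ring
    _ ≤ ((H:ℝ) * S * A) * (2 * Real.log (8 * T) + ψ * Real.log (16 * ψ)) :=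
        mul_le_mul_of_nonneg_left hkey hHSA
    _ = 2 * H * S * A * Real.log (8 * T) + H * S * A * ψ * Real.log (16 * ψ) := by ring

/-- Consider `K ≥ 1` episodes of horizon `H ≥ 1` over finite state/action sets of sizes `S`,
`A`, with `T = K·H`, visited pairs `(s_h^k, a_h^k)`, delays `τ_k`, observed counters
`N'_{kh}(s,a) = #{i : 1 ≤ i < k, (s_h^i, a_h^i) = (s,a), i + τ_i < k}` and missing-episode
counts `S_k = #{i : 1 ≤ i < k, i + τ_i ≥ k}`. If `ψ ≥ 1` satisfies `S_k ≤ ψ` for all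
`k ∈ {1,…,K}`, then
`∑_{k=1}^{K} ∑_{h=1}^{H} 1/(max 1 N'_{kh}(s_h^k, a_h^k)) ≤ 2·H·S·A·log(8T) + H·S·A·ψ·log(16ψ)`. -/
theorem stmt_8 {𝒮 𝒜 : Type*} [Fintype 𝒮] [Fintype 𝒜] [Nonempty 𝒮] [Nonempty 𝒜]
    [DecidableEq 𝒮] [DecidableEq 𝒜]
    (S A K H T : ℕ) (hS : Fintype.card 𝒮 = S) (hA : Fintype.card 𝒜 = A)
    (hK : 1 ≤ K) (hH : 1 ≤ H) (hT : T = K * H)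
    (s : ℕ → ℕ → 𝒮) (a : ℕ → ℕ → 𝒜) (τ : ℕ → ℕ)
    (N' : ℕ → ℕ → 𝒮 → 𝒜 → ℕ)
    (hN' : ∀ k h st ac, N' k h st ac =
      ((Finset.Ico 1 k).filter (fun i => s i h = st ∧ a i h = ac ∧ i + τ i < k)).card)
    (ψ : ℝ) (hψ : 1 ≤ ψ)
    (hSk : ∀ k ∈ Finset.Icc 1 K,
      ((((Finset.Ico 1 k).filter (fun i => k ≤ i + τ i)).card : ℝ)) ≤ ψ) :
    ∑ k ∈ Finset.Icc 1 K, ∑ h ∈ Finset.Icc 1 H,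
        1 / max 1 ((N' k h (s k h) (a k h) : ℝ))
      ≤ 2 * H * S * A * Real.log (8 * T) + H * S * A * ψ * Real.log (16 * ψ) := by
  classical
  set m : ℕ := Nat.ceil ψ with hm
  set B : ℝ := (m:ℝ) + 2 + Real.log K with hB
  -- per-step-h bound
  have key : ∀ h : ℕ, ∑ k ∈ Finset.Icc 1 K, 1 / max 1 ((N' k h (s k h) (a k h) : ℝ))
      ≤ ((S:ℝ) * A) * B := by
    intro h
    rw [← Finset.sum_fiberwise (Finset.Icc 1 K) (fun k => (s k h, a k h))
      (fun k => 1 / max 1 ((N' k h (s k h) (a k h) : ℝ)))]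
    have fiber : ∀ p : 𝒮 × 𝒜,
        ∑ k ∈ (Finset.Icc 1 K).filter (fun k => (s k h, a k h) = p),
          1 / max 1 ((N' k h (s k h) (a k h) : ℝ)) ≤ B := by
      intro p
      set V := (Finset.Icc 1 K).filter (fun k => (s k h, a k h) = p) with hV
      set c : ℕ → ℕ := fun k => (V.filter (fun i => i < k)).card with hc
      have hmono : ∀ k1 ∈ V, ∀ k2 ∈ V, k1 < k2 → c k1 < c k2 := by
        intro k1 h1 k2 h2 hlt
        apply Finset.card_lt_card
        have hsub : V.filter (fun i => i < k1) ⊆ V.filter (fun i => i < k2) := by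
          intro x hx
          rw [Finset.mem_filter] at hx ⊢
          exact ⟨hx.1, lt_trans hx.2 hlt⟩
        rw [Finset.ssubset_iff_of_subset hsub]
        exact ⟨k1, Finset.mem_filter.mpr ⟨h1, hlt⟩, by simp⟩
      have hinj : ∀ k1 ∈ V, ∀ k2 ∈ V, c k1 = c k2 → k1 = k2 := by
        intro k1 h1 k2 h2 heq
        rcases lt_trichotomy k1 k2 with hl | he | hg
        · exact absurd heq (Nat.ne_of_lt (hmono k1 h1 k2 h2 hl))
        · exact he
        · exact absurd heq.symm (Nat.ne_of_lt (hmono k2 h2 k1 h1 hg))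
      have hclt : ∀ k ∈ V, c k < K := by
        intro k hk
        have hsub : V.filter (fun i => i < k) ⊆ V.erase k := by
          intro i hi
          rw [Finset.mem_filter] at hi
          exact Finset.mem_erase.mpr ⟨Nat.ne_of_lt hi.2, hi.1⟩
        have h1 := Finset.card_le_card hsub
        rw [Finset.card_erase_of_mem hk] at h1
        have h2 : V.card ≤ K := by
          calc V.card ≤ (Finset.Icc 1 K).card := Finset.card_le_card (Finset.filter_subset _ _)
            _ = K := by rw [Nat.card_Icc]; omega
        have h3 : 1 ≤ V.card := Finset.card_pos.mpr ⟨k, hk⟩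
        simp only [hc]
        omega
      have hterm : ∀ k ∈ V, 1 / max 1 ((N' k h (s k h) (a k h) : ℝ))
          ≤ 1 / max 1 ((c k : ℝ) - m) := by
        intro k hk
        have hkmem := Finset.mem_filter.mp hk
        have hkIcc : k ∈ Finset.Icc 1 K := hkmem.1
        have hkK := Finset.mem_Icc.mp hkIcc
        have hp : (s k h, a k h) = p := hkmem.2
        -- identify the visit-prefix set
        have hP : V.filter (fun i => i < k)
            = (Finset.Ico 1 k).filter (fun i => s i h = s k h ∧ a i h = a k h) := by
          ext i
          simp only [hV, Finset.mem_filter, Finset.mem_Icc, Finset.mem_Ico, ← hp,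
            Prod.mk.injEq]
          constructor
          · rintro ⟨⟨⟨hi1, hiK⟩, hsa⟩, hik⟩
            exact ⟨⟨hi1, hik⟩, hsa⟩
          · rintro ⟨⟨hi1, hik⟩, hsa⟩
            exact ⟨⟨⟨hi1, by omega⟩, hsa⟩, hik⟩
        set P := (Finset.Ico 1 k).filter (fun i => s i h = s k h ∧ a i h = a k h) with hPdef
        have hsplit : (P.card : ℝ) ≤ (N' k h (s k h) (a k h) : ℝ) + ψ := by
          have h1 : (P.filter (fun i => i + τ i < k)).card
              + (P.filter (fun i => ¬ (i + τ i < k))).card = P.card :=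
            Finset.card_filter_add_card_filter_not _
          have h2 : P.filter (fun i => i + τ i < k)
              = (Finset.Ico 1 k).filter
                  (fun i => s i h = s k h ∧ a i h = a k h ∧ i + τ i < k) := by
            rw [hPdef, Finset.filter_filter]
            apply Finset.filter_congr
            intro i _
            simp [and_assoc]
          have h3 : P.filter (fun i => ¬ (i + τ i < k))
              ⊆ (Finset.Ico 1 k).filter (fun i => k ≤ i + τ i) := by
            intro i hi
            rw [hPdef, Finset.mem_filter, Finset.mem_filter] at hi
            exact Finset.mem_filter.mpr ⟨hi.1.1, by omega⟩
          have h4 := hSk k hkIcc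
          have h5 := Finset.card_le_card h3
          have h6 : N' k h (s k h) (a k h) = (P.filter (fun i => i + τ i < k)).card := by
            rw [hN', h2]
          have h7 : ((P.filter (fun i => ¬ (i + τ i < k))).card : ℝ) ≤ ψ :=
            le_trans (by exact_mod_cast h5) h4
          have h8 : (P.card : ℝ) = ((P.filter (fun i => i + τ i < k)).card : ℝ)
              + ((P.filter (fun i => ¬ (i + τ i < k))).card : ℝ) := by
            exact_mod_cast h1.symm
          rw [h6]
          linarith
        have hcψ : ((c k : ℝ)) - (m:ℝ) ≤ (N' k h (s k h) (a k h) : ℝ) := by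
          have hmψ : ψ ≤ (m:ℝ) := Nat.le_ceil ψ
          have : (c k : ℝ) = (P.card : ℝ) := by rw [hc]; exact_mod_cast congrArg Finset.card hP
          linarith
        apply one_div_le_one_div_of_le (lt_of_lt_of_le one_pos (le_max_left _ _))
        exact max_le_max le_rfl hcψ
      have hnonneg : ∀ n : ℕ, (0:ℝ) ≤ 1 / max 1 ((n:ℝ) - m) := by
        intro n
        positivity
      calc ∑ k ∈ V, 1 / max 1 ((N' k h (s k h) (a k h) : ℝ))
          ≤ ∑ k ∈ V, 1 / max 1 ((c k : ℝ) - m) := Finset.sum_le_sum hterm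
        _ = ∑ n ∈ V.image c, 1 / max 1 ((n:ℝ) - m) := by rw [Finset.sum_image hinj]
        _ ≤ ∑ n ∈ Finset.range K, 1 / max 1 ((n:ℝ) - m) := by
            apply Finset.sum_le_sum_of_subset_of_nonneg
            · intro n hn
              obtain ⟨k, hkV, rfl⟩ := Finset.mem_image.mp hn
              exact Finset.mem_range.mpr (hclt k hkV)
            · intro n _ _
              exact hnonneg n
        _ ≤ B := sumg8 m K hK
    calc ∑ p : 𝒮 × 𝒜, ∑ k ∈ (Finset.Icc 1 K).filter (fun k => (s k h, a k h) = p),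
          1 / max 1 ((N' k h (s k h) (a k h) : ℝ))
        ≤ ∑ _p : 𝒮 × 𝒜, B := Finset.sum_le_sum fun p _ => fiber p
      _ = ((S:ℝ) * A) * B := by
          rw [Finset.sum_const, Finset.card_univ, Fintype.card_prod, hS, hA, nsmul_eq_mul]
          push_cast
          ring
  have hS1 : 1 ≤ S := hS ▸ Fintype.card_pos
  have hA1 : 1 ≤ A := hA ▸ Fintype.card_pos
  calc ∑ k ∈ Finset.Icc 1 K, ∑ h ∈ Finset.Icc 1 H,
        1 / max 1 ((N' k h (s k h) (a k h) : ℝ))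
      = ∑ h ∈ Finset.Icc 1 H, ∑ k ∈ Finset.Icc 1 K,
          1 / max 1 ((N' k h (s k h) (a k h) : ℝ)) := Finset.sum_comm
    _ ≤ ∑ _h ∈ Finset.Icc 1 H, ((S:ℝ) * A) * B := Finset.sum_le_sum fun h _ => key h
    _ = (H:ℝ) * ((S:ℝ) * A * B) := by
        rw [Finset.sum_const, Nat.card_Icc, Nat.add_sub_cancel, nsmul_eq_mul]
    _ ≤ 2 * H * S * A * Real.log (8 * T) + H * S * A * ψ * Real.log (16 * ψ) :=
        final8 K H S A T ψ hψ hK hH hS1 hA1 hT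
end

section
/- The total number of epochs produced by lazy updating satisfies J ≤ 1 + H·S·A·log(K/(S·A) + 1)/log(1 + 1/α). -/
/-! With `β = 1 + 1/α`, each new epoch multiplies the clipped counter `max 1 N'` of at least one
triple `(h, s, a)` by `β`, while all other counters can only grow; hence the product of the
`H·S·A` clipped counters at the last epoch start is at least `β^(J-1)`. For each step `h` the
counters sum to at most `K`, so by concavity of `log` (AM–GM) that product is at most
`(K/(S·A) + 1)^(H·S·A)`. Taking logarithms gives the bound. -/

/-- The lazy-updating trigger condition: episode `k` triggers a new epoch relative to the epoch
start `kj` if some state–action–step triple has its observed visitation counter reach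
`(1 + 1/α)` times (the positive part of) its value at the epoch start. -/
def lazyTrigger {𝒮 𝒜 : Type*} (H : ℕ) (α : ℝ) (N' : ℕ → ℕ → 𝒮 → 𝒜 → ℕ)
    (kj k : ℕ) : Prop :=
  ∃ st : 𝒮, ∃ ac : 𝒜, ∃ h ∈ Finset.Icc 1 H,
    (1 + 1 / α) * max 1 ((N' kj h st ac : ℝ)) ≤ (N' k h st ac : ℝ)

open Finset Real

section ProductGrowth

variable {ι R : Type*} [CommSemiring R] [PartialOrder R] [IsOrderedRing R] {U : Finset ι}

theorem mul_prod_le_prod_of_exists_mul_le {f f' : ι → R} {β : R}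
    (hf : ∀ i ∈ U, 0 ≤ f i) (hle : ∀ i ∈ U, f i ≤ f' i) (hjump : ∃ i ∈ U, β * f i ≤ f' i) :
    β * ∏ i ∈ U, f i ≤ ∏ i ∈ U, f' i := by
  classical
  obtain ⟨i, hi, hβi⟩ := hjump
  rw [← mul_prod_erase U f hi, ← mul_prod_erase U f' hi, ← mul_assoc]
  exact mul_le_mul hβi
    (prod_le_prod (fun j hj => hf j (mem_of_mem_erase hj)) fun j hj => hle j (mem_of_mem_erase hj))
    (prod_nonneg fun j hj => hf j (mem_of_mem_erase hj)) ((hf i hi).trans (hle i hi))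

theorem pow_mul_prod_le_prod_of_exists_mul_le {g : ℕ → ι → R} {β : R} (hβ : 0 ≤ β) {n : ℕ}
    (hg : ∀ j < n, ∀ i ∈ U, 0 ≤ g j i) (hmono : ∀ j < n, ∀ i ∈ U, g j i ≤ g (j + 1) i)
    (hjump : ∀ j < n, ∃ i ∈ U, β * g j i ≤ g (j + 1) i) :
    β ^ n * ∏ i ∈ U, g 0 i ≤ ∏ i ∈ U, g n i := by
  induction n with
  | zero => simp
  | succ n ih =>
    calc β ^ (n + 1) * ∏ i ∈ U, g 0 i = β * (β ^ n * ∏ i ∈ U, g 0 i) := by ring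
      _ ≤ β * ∏ i ∈ U, g n i := by
        gcongr
        exact ih (fun j hj => hg j (by omega)) (fun j hj => hmono j (by omega))
          (fun j hj => hjump j (by omega))
      _ ≤ ∏ i ∈ U, g (n + 1) i :=
        mul_prod_le_prod_of_exists_mul_le (hg n n.lt_succ_self) (hmono n n.lt_succ_self)
          (hjump n n.lt_succ_self)

end ProductGrowth

theorem sum_log_le_card_mul_log_of_sum_le {ι : Type*} {s : Finset ι} {x : ι → ℝ} {c : ℝ}
    (hx : ∀ i ∈ s, 0 < x i) (hsum : ∑ i ∈ s, x i ≤ #s * c) :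
    ∑ i ∈ s, log (x i) ≤ #s * log c := by
  rcases s.eq_empty_or_nonempty with rfl | hne
  · simp
  have hc : 0 < c := pos_of_mul_pos_right ((sum_pos hx hne).trans_le hsum) (Nat.cast_nonneg _)
  have htangent : ∀ i ∈ s, log (x i) ≤ log c + x i / c - 1 := fun i hi => by
    have := log_le_sub_one_of_pos (div_pos (hx i hi) hc)
    rw [log_div (hx i hi).ne' hc.ne'] at this
    linarith
  have hmean : (∑ i ∈ s, x i) / c ≤ #s := (div_le_iff₀ hc).2 hsum
  calc ∑ i ∈ s, log (x i) ≤ ∑ i ∈ s, (log c + x i / c - 1) := sum_le_sum htangent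
    _ = #s * log c + (∑ i ∈ s, x i) / c - #s := by
      rw [sum_sub_distrib, sum_add_distrib, ← sum_div]
      simp only [sum_const, nsmul_eq_mul, mul_one]
    _ ≤ #s * log c := by linarith

section ObservedCount

variable {𝒮 𝒜 : Type*} [DecidableEq 𝒮] [DecidableEq 𝒜]
  (s : ℕ → ℕ → 𝒮) (a : ℕ → ℕ → 𝒜) (τ : ℕ → ℕ)

def observedCount (k h : ℕ) (st : 𝒮) (ac : 𝒜) : ℕ :=
  #{i ∈ Ico 1 k | s i h = st ∧ a i h = ac ∧ i + τ i < k}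

theorem observedCount_mono (h : ℕ) (st : 𝒮) (ac : 𝒜) :
    Monotone (observedCount s a τ · h st ac) := fun k k' hk =>
  card_le_card fun i hi => by
    simp only [mem_filter, mem_Ico] at hi ⊢
    exact ⟨⟨hi.1.1, by omega⟩, hi.2.1, hi.2.2.1, by omega⟩

theorem sum_observedCount_le [Fintype 𝒮] [Fintype 𝒜] (k h : ℕ) :
    ∑ p : 𝒮 × 𝒜, observedCount s a τ k h p.1 p.2 ≤ k := by
  have hfiber := card_eq_sum_card_fiberwise (s := {i ∈ Ico 1 k | i + τ i < k}) (t := univ)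
    (f := fun i => (s i h, a i h)) fun _ _ => mem_univ _
  calc ∑ p : 𝒮 × 𝒜, observedCount s a τ k h p.1 p.2
      = #{i ∈ Ico 1 k | i + τ i < k} := by
        rw [hfiber]
        refine sum_congr rfl fun p _ => ?_
        rw [observedCount, filter_filter]
        congr 1
        refine filter_congr fun i _ => ?_
        simp only [Prod.ext_iff]
        tauto
    _ ≤ #(Ico 1 k) := card_filter_le _ _
    _ ≤ k := by simp

theorem sum_log_max_one_observedCount_le [Fintype 𝒮] [Fintype 𝒜] (H k : ℕ) :
    ∑ t ∈ Icc 1 H ×ˢ (univ : Finset (𝒮 × 𝒜)),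
        log (max 1 (observedCount s a τ k t.1 t.2.1 t.2.2 : ℝ))
      ≤ H * Fintype.card 𝒮 * Fintype.card 𝒜 *
        log (k / (Fintype.card 𝒮 * Fintype.card 𝒜) + 1) := by
  set m : ℝ := Fintype.card 𝒮 * Fintype.card 𝒜
  have hstep : ∀ h, ∑ p : 𝒮 × 𝒜, ((observedCount s a τ k h p.1 p.2 : ℝ) + 1) ≤
      m * (k / m + 1) := by
    intro h
    rcases isEmpty_or_nonempty (𝒮 × 𝒜) with hempty | hne
    · simp only [univ_eq_empty, sum_empty, m]
      positivity
    have hm : m ≠ 0 := by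
      have : 0 < Fintype.card (𝒮 × 𝒜) := Fintype.card_pos
      rw [Fintype.card_prod] at this
      simp only [m]
      exact_mod_cast this.ne'
    rw [sum_add_distrib, mul_add, mul_div_cancel₀ _ hm, mul_one]
    simp only [sum_const, card_univ, Fintype.card_prod, nsmul_eq_mul, mul_one, Nat.cast_mul, m]
    gcongr
    exact_mod_cast sum_observedCount_le s a τ k h
  calc _ ≤ ∑ t ∈ Icc 1 H ×ˢ (univ : Finset (𝒮 × 𝒜)),
          log (observedCount s a τ k t.1 t.2.1 t.2.2 + 1 : ℝ) :=
        sum_le_sum fun t _ => log_le_log (by positivity) (max_le (by simp) (by simp))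
    _ ≤ #(Icc 1 H ×ˢ (univ : Finset (𝒮 × 𝒜))) * log (k / m + 1) := by
        refine sum_log_le_card_mul_log_of_sum_le (fun t _ => by positivity) ?_
        calc _ = ∑ h ∈ Icc 1 H, ∑ p : 𝒮 × 𝒜, ((observedCount s a τ k h p.1 p.2 : ℝ) + 1) :=
              sum_product _ _ _
          _ ≤ ∑ h ∈ Icc 1 H, m * (k / m + 1) := sum_le_sum fun h _ => hstep h
          _ = _ := by simp [m, mul_assoc]
    _ = _ := by simp [m, mul_assoc]

end ObservedCount

theorem pow_le_prod_of_lazyTrigger {𝒮 𝒜 : Type*} [Fintype 𝒮] [Fintype 𝒜] {H : ℕ} {α : ℝ}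
    (hα : 0 ≤ α) {N : ℕ → ℕ → 𝒮 → 𝒜 → ℕ} (hN : ∀ h st ac, Monotone (N · h st ac))
    {e : ℕ → ℕ} {n : ℕ} (he : ∀ j < n, e j ≤ e (j + 1) ∧ lazyTrigger H α N (e j) (e (j + 1))) :
    (1 + 1 / α) ^ n ≤
      ∏ t ∈ Icc 1 H ×ˢ (univ : Finset (𝒮 × 𝒜)), max 1 (N (e n) t.1 t.2.1 t.2.2 : ℝ) := by
  have hgrowth := pow_mul_prod_le_prod_of_exists_mul_le (U := Icc 1 H ×ˢ (univ : Finset (𝒮 × 𝒜)))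
    (g := fun j t => max 1 (N (e j) t.1 t.2.1 t.2.2 : ℝ)) (β := 1 + 1 / α) (by positivity) (n := n)
    (fun _ _ _ _ => by positivity)
    (fun j hj t _ => max_le_max le_rfl (by exact_mod_cast hN _ _ _ (he j hj).1))
    (fun j hj => by
      obtain ⟨st, ac, h, hh, hjump⟩ := (he j hj).2
      exact ⟨(h, st, ac), mem_product.2 ⟨hh, mem_univ _⟩, hjump.trans (le_max_right _ _)⟩)
  exact le_mul_of_one_le_right (by positivity) (one_le_prod fun _ _ => le_max_left _ _)
    |>.trans hgrowth

theorem stmt_9_general {𝒮 𝒜 : Type*} [Fintype 𝒮] [Fintype 𝒜]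
    [DecidableEq 𝒮] [DecidableEq 𝒜]
    (S A K H : ℕ) (hS : Fintype.card 𝒮 = S) (hA : Fintype.card 𝒜 = A)
    (hK : 1 ≤ K)
    (s : ℕ → ℕ → 𝒮) (a : ℕ → ℕ → 𝒜) (τ : ℕ → ℕ)
    (α : ℝ) (hα : 1 ≤ α)
    (N' : ℕ → ℕ → 𝒮 → 𝒜 → ℕ)
    (hN' : ∀ k h st ac, N' k h st ac =
      ((Finset.Ico 1 k).filter (fun i => s i h = st ∧ a i h = ac ∧ i + τ i < k)).card)
    (J : ℕ) (e : ℕ → ℕ)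
    (he0 : e 0 = 1)
    (hsucc : ∀ j, j + 1 < J →
      e j < e (j + 1) ∧ e (j + 1) ≤ K ∧ lazyTrigger H α N' (e j) (e (j + 1)) ∧
        ∀ k, e j < k → k < e (j + 1) → ¬ lazyTrigger H α N' (e j) k) :
    (J : ℝ) ≤ 1 + H * S * A * Real.log ((K : ℝ) / (S * A) + 1) / Real.log (1 + 1 / α) := by
  obtain rfl : N' = observedCount s a τ := by
    funext k h st ac
    exact hN' k h st ac
  subst hS hA
  set n := J - 1
  have hβ : 1 < 1 + 1 / α := by simp only [lt_add_iff_pos_right, one_div, inv_pos]; linarith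
  have heK : e n ≤ K := by
    rcases Nat.eq_zero_or_pos n with hn | hn
    · rw [hn, he0]; exact hK
    · simpa [Nat.sub_add_cancel hn] using (hsucc (n - 1) (by omega)).2.1
  have hgrowth := pow_le_prod_of_lazyTrigger (H := H) (by linarith) (observedCount_mono s a τ)
    (n := n) fun j hj => ⟨(hsucc j (by omega)).1.le, (hsucc j (by omega)).2.2.1⟩
  have hlog : n * log (1 + 1 / α) ≤
      H * Fintype.card 𝒮 * Fintype.card 𝒜 * log (K / (Fintype.card 𝒮 * Fintype.card 𝒜) + 1) :=
    calc n * log (1 + 1 / α) = log ((1 + 1 / α) ^ n) := (log_pow _ _).symm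
      _ ≤ ∑ t ∈ Icc 1 H ×ˢ (univ : Finset (𝒮 × 𝒜)),
            log (max 1 (observedCount s a τ (e n) t.1 t.2.1 t.2.2 : ℝ)) := by
        rw [← log_prod fun _ _ => by positivity]
        exact log_le_log (by positivity) hgrowth
      _ ≤ _ := sum_log_max_one_observedCount_le s a τ H (e n)
      _ ≤ _ := by gcongr
  have hJn : (J : ℝ) ≤ n + 1 := by exact_mod_cast (by omega : J ≤ n + 1)
  have := (le_div_iff₀ (log_pos hβ)).2 hlog
  linarith

/-- Consider `K ≥ 1` episodes of horizon `H ≥ 1` over finite state/action sets of sizes `S`,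
`A`, visited pairs `(s_h^k, a_h^k)`, delays `τ_k`, and observed counters
`N'_{kh}(s,a) = #{i : 1 ≤ i < k, (s_h^i, a_h^i) = (s,a), i + τ_i < k}`. Fix `α ≥ 1`. Lazy
updating starts with epoch start `k_1 = 1` and recursively lets `k_{j+1}` be the least episode
`k` with `k_j < k ≤ K` such that `N'_{kh}(s,a) ≥ (1 + 1/α)·max{1, N'_{k_j h}(s,a)}` for some
`(s,a,h)`, stopping when no such episode exists; `J` is the total number of epoch starts
`k_1 < … < k_J` (encoded here as `e 0, …, e (J-1)`). Then
`J ≤ 1 + H·S·A·log(K/(S·A) + 1)/log(1 + 1/α)`. -/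
theorem stmt_9 {𝒮 𝒜 : Type*} [Fintype 𝒮] [Fintype 𝒜] [Nonempty 𝒮] [Nonempty 𝒜]
    [DecidableEq 𝒮] [DecidableEq 𝒜]
    (S A K H : ℕ) (hS : Fintype.card 𝒮 = S) (hA : Fintype.card 𝒜 = A)
    (hK : 1 ≤ K) (hH : 1 ≤ H)
    (s : ℕ → ℕ → 𝒮) (a : ℕ → ℕ → 𝒜) (τ : ℕ → ℕ)
    (α : ℝ) (hα : 1 ≤ α)
    (N' : ℕ → ℕ → 𝒮 → 𝒜 → ℕ)
    (hN' : ∀ k h st ac, N' k h st ac =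
      ((Finset.Ico 1 k).filter (fun i => s i h = st ∧ a i h = ac ∧ i + τ i < k)).card)
    (J : ℕ) (hJ : 1 ≤ J) (e : ℕ → ℕ)
    (he0 : e 0 = 1)
    (hsucc : ∀ j, j + 1 < J →
      e j < e (j + 1) ∧ e (j + 1) ≤ K ∧ lazyTrigger H α N' (e j) (e (j + 1)) ∧
        ∀ k, e j < k → k < e (j + 1) → ¬ lazyTrigger H α N' (e j) k)
    (hstop : ∀ k, e (J - 1) < k → k ≤ K → ¬ lazyTrigger H α N' (e (J - 1)) k) :
    (J : ℝ) ≤ 1 + H * S * A * Real.log ((K : ℝ) / (S * A) + 1) / Real.log (1 + 1 / α) :=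
  stmt_9_general S A K H hS hA hK s a τ α hα N' hN' J e he0 hsucc
end

section
/- Let α ≥ 1 be a real number, m ≥ 1 a natural number, j_1, …, j_m nonnegative real numbers, and T a real number with T ≥ Σ_{x=1}^{m} ((1/α)·(1 + 1/α)^{j_x + 1} − (1/α)·(1 + 1/α)). Then Σ_{x=1}^{m} j_x ≤ m·log(αT/m + 1)/log(1 + 1/α). -/
/-- Let `α ≥ 1`, `m ≥ 1`, `j_1, …, j_m ≥ 0` reals, and `T` a real with
`T ≥ ∑_{x=1}^{m} ((1/α)·(1 + 1/α)^{j_x + 1} − (1/α)·(1 + 1/α))`. Then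
`∑_{x=1}^{m} j_x ≤ m·log(α·T/m + 1)/log(1 + 1/α)`. -/
theorem stmt_10 (α : ℝ) (hα : 1 ≤ α) (m : ℕ) (hm : 1 ≤ m)
    (j : Fin m → ℝ) (hj : ∀ x, 0 ≤ j x) (T : ℝ)
    (hT : ∑ x, ((1 / α) * (1 + 1 / α) ^ (j x + 1) - (1 / α) * (1 + 1 / α)) ≤ T) :
    ∑ x, j x ≤ m * Real.log (α * T / m + 1) / Real.log (1 + 1 / α) := by
  have hα0 : (0 : ℝ) < α := lt_of_lt_of_le one_pos hα
  set b : ℝ := 1 + 1 / α with hbdef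
  clear_value b
  have hb1 : 1 < b := by
    have : 0 < 1 / α := by positivity
    linarith
  have hb0 : 0 < b := lt_trans one_pos hb1
  have hlogb : 0 < Real.log b := Real.log_pos hb1
  have hm0 : (0 : ℝ) < (m : ℝ) := by exact_mod_cast hm
  -- each term of the sum is nonnegative, so T ≥ 0
  have hterm : ∀ x : Fin m, 0 ≤ (1 / α) * b ^ (j x + 1) - (1 / α) * b := by
    intro x
    have h1 : b ^ (1 : ℝ) ≤ b ^ (j x + 1) :=
      Real.rpow_le_rpow_left_iff hb1 |>.mpr (by linarith [hj x])
    rw [Real.rpow_one] at h1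
    have : (0 : ℝ) < 1 / α := by positivity
    nlinarith
  have hT0 : 0 ≤ T := le_trans (Finset.sum_nonneg fun x _ => hterm x) hT
  -- key bound: ∑ b ^ j x ≤ α*T + m
  have hsum : ∑ x, b ^ (j x) ≤ α * T + m := by
    have expand : ∀ x : Fin m, (1 / α) * b ^ (j x + 1) - (1 / α) * b
        = (1 / α) * b * (b ^ (j x) - 1) := by
      intro x
      rw [Real.rpow_add hb0, Real.rpow_one]
      ring
    have h1 : ∑ x, ((1 / α) * b * (b ^ (j x) - 1)) ≤ T := by
      rw [← Finset.sum_congr rfl fun x _ => expand x]; exact hT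
    rw [← Finset.mul_sum] at h1
    have h2 : ∑ x, (b ^ (j x) - 1) ≤ α * T / b := by
      rw [le_div_iff₀ hb0]
      calc (∑ x, (b ^ (j x) - 1)) * b
          = α * ((1 / α) * b * ∑ x, (b ^ (j x) - 1)) := by
            field_simp
        _ ≤ α * T := by
            exact mul_le_mul_of_nonneg_left h1 (le_of_lt hα0)
    have h3 : α * T / b ≤ α * T := by
      apply div_le_self (by positivity) (le_of_lt hb1)
    have h4 : ∑ x, (b ^ (j x) - 1) = (∑ x, b ^ (j x)) - m := by
      rw [Finset.sum_sub_distrib]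
      simp
    linarith
  -- AM-GM: b ^ ((∑ j)/m) ≤ (∑ b^j)/m
  have hamgm : b ^ ((∑ x, j x) / m) ≤ (∑ x, b ^ (j x)) / m := by
    have := Real.geom_mean_le_arith_mean_weighted Finset.univ
      (fun _ : Fin m => (1 : ℝ) / m) (fun x => b ^ (j x))
      (fun i _ => by positivity)
      (by simp [Finset.sum_const]; field_simp)
      (fun i _ => le_of_lt (Real.rpow_pos_of_pos hb0 _))
    calc b ^ ((∑ x, j x) / m) = ∏ x, (b ^ (j x)) ^ ((1:ℝ) / m) := by
          rw [Finset.sum_div, Real.rpow_sum_of_pos hb0]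
          refine Finset.prod_congr rfl fun x _ => ?_
          rw [← Real.rpow_mul (le_of_lt hb0), mul_one_div]
      _ ≤ ∑ x, (1:ℝ) / m * b ^ (j x) := this
      _ = (∑ x, b ^ (j x)) / m := by rw [← Finset.mul_sum]; ring
  have hA : b ^ ((∑ x, j x) / m) ≤ α * T / m + 1 := by
    calc b ^ ((∑ x, j x) / m) ≤ (∑ x, b ^ (j x)) / m := hamgm
      _ ≤ (α * T + m) / m := by gcongr
      _ = α * T / m + 1 := by rw [add_div, div_self hm0.ne']
  -- take logs
  have hpos : (0 : ℝ) < b ^ ((∑ x, j x) / m) := Real.rpow_pos_of_pos hb0 _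
  have hlog : ((∑ x, j x) / m) * Real.log b ≤ Real.log (α * T / m + 1) := by
    rw [← Real.log_rpow hb0]
    exact Real.log_le_log hpos hA
  rw [div_mul_eq_mul_div, div_le_iff₀ hm0] at hlog
  have hlog' : (∑ x, j x) * Real.log b ≤ ↑m * Real.log (α * T / ↑m + 1) := by
    linarith [hlog]
  rw [le_div_iff₀ hlogb]
  linarith [hlog']
end

section
/- Σ_{j=1}^{J} n_j/√(N_{j−1}) ≤ (√2·(1 + 1/α) + 1)·√(N_J). -/
/-- Let `α ≥ 1`, `J ≥ 1`, and let `n_0, …, n_J` be reals with `n_0 = 0` and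
`0 ≤ n_j ≤ N_{j−1}/α` for `1 ≤ j ≤ J`, where `N_j = max 1 (∑_{i=0}^{j} n_i)`. Then
`∑_{j=1}^{J} n_j/√(N_{j−1}) ≤ (√2·(1 + 1/α) + 1)·√(N_J)`. -/
theorem stmt_11 (α : ℝ) (hα : 1 ≤ α) (J : ℕ) (hJ : 1 ≤ J)
    (n : ℕ → ℝ) (hn0 : n 0 = 0)
    (N : ℕ → ℝ) (hN : ∀ j, N j = max 1 (∑ i ∈ Finset.range (j + 1), n i))
    (hn : ∀ j, 1 ≤ j → j ≤ J → 0 ≤ n j ∧ n j ≤ N (j - 1) / α) :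
    ∑ j ∈ Finset.Icc 1 J, n j / Real.sqrt (N (j - 1))
      ≤ (Real.sqrt 2 * (1 + 1 / α) + 1) * Real.sqrt (N J) := by
  have hα0 : (0:ℝ) < α := lt_of_lt_of_le one_pos hα
  have hs2sq : Real.sqrt 2 ^ 2 = 2 := Real.sq_sqrt (by norm_num)
  have hs2nn : 0 ≤ Real.sqrt 2 := Real.sqrt_nonneg 2
  have hN1 : ∀ j, 1 ≤ N j := fun j => (hN j) ▸ le_max_left _ _
  -- key pointwise inequality
  have key : ∀ j, 1 ≤ j → j ≤ J →
      n j / Real.sqrt (N (j-1)) ≤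
        (Real.sqrt 2 + 1) * (Real.sqrt (N j) - Real.sqrt (N (j-1)))
          + (n j - (N j - N (j-1))) := by
    intro j h1 h2
    obtain ⟨hn1, hn2⟩ := hn j h1 h2
    have hrange : j - 1 + 1 = j := Nat.succ_pred_eq_of_pos h1
    have hstep : ∑ i ∈ Finset.range (j+1), n i
        = (∑ i ∈ Finset.range ((j-1)+1), n i) + n j := by
      rw [hrange]; exact Finset.sum_range_succ n j
    have ha1 : 1 ≤ N (j-1) := hN1 _
    have hb1 : 1 ≤ N j := hN1 _
    have hab : N (j-1) ≤ N j := by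
      rw [hN j, hN (j-1)]
      exact max_le_max le_rfl (by rw [hstep]; linarith)
    have hba : N j ≤ N (j-1) + n j := by
      rw [hN j, hN (j-1), hstep]
      refine max_le ?_ ?_
      · have := le_max_left 1 (∑ i ∈ Finset.range ((j-1)+1), n i); linarith
      · have := le_max_right 1 (∑ i ∈ Finset.range ((j-1)+1), n i); linarith
    have hnja : n j ≤ N (j-1) := le_trans hn2 (div_le_self (by linarith) hα)
    have hb2a : N j ≤ 2 * N (j-1) := by linarith
    have hsa1 : 1 ≤ Real.sqrt (N (j-1)) := by
      have := Real.sqrt_le_sqrt (show (1:ℝ) ≤ N (j-1) from ha1)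
      rwa [Real.sqrt_one] at this
    have hsasq : Real.sqrt (N (j-1)) ^ 2 = N (j-1) := Real.sq_sqrt (by linarith)
    have hsbsq : Real.sqrt (N j) ^ 2 = N j := Real.sq_sqrt (by linarith)
    have hsab : Real.sqrt (N (j-1)) ≤ Real.sqrt (N j) := Real.sqrt_le_sqrt hab
    have hsb2 : Real.sqrt (N j) ≤ Real.sqrt 2 * Real.sqrt (N (j-1)) := by
      rw [← Real.sqrt_mul (by norm_num)]
      exact Real.sqrt_le_sqrt hb2a
    have hg : 0 ≤ n j - (N j - N (j-1)) := by linarith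
    rw [div_le_iff₀ (by linarith : (0:ℝ) < Real.sqrt (N (j-1)))]
    nlinarith [mul_nonneg (sub_nonneg.2 hsab) (sub_nonneg.2 hsb2),
      mul_nonneg hg (sub_nonneg.2 hsa1)]
  -- telescoping lemma
  have tel : ∀ f : ℕ → ℝ, ∑ j ∈ Finset.Icc 1 J, (f j - f (j-1)) = f J - f 0 := by
    intro f
    rw [← Finset.Ico_add_one_right_eq_Icc, Finset.sum_Ico_eq_sum_range]
    have h1 : J + 1 - 1 = J := by omega
    rw [h1]
    have h2 : ∀ i ∈ Finset.range J, f (1+i) - f (1+i-1) = f (i+1) - f i := by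
      intro i _
      have : 1 + i - 1 = i := by omega
      rw [this, Nat.add_comm]
    rw [Finset.sum_congr rfl h2]
    exact Finset.sum_range_sub f J
  have hN0 : N 0 = 1 := by
    rw [hN 0]
    simp [hn0]
  have hsum_n : ∑ j ∈ Finset.Icc 1 J, n j ≤ N J := by
    have hins : Finset.range (J+1) = insert 0 (Finset.Icc 1 J) := by
      ext x; simp [Nat.lt_succ_iff]; omega
    have : ∑ i ∈ Finset.range (J+1), n i = ∑ j ∈ Finset.Icc 1 J, n j := by
      rw [hins, Finset.sum_insert (by simp), hn0, zero_add]
    rw [hN J] at *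
    calc ∑ j ∈ Finset.Icc 1 J, n j = ∑ i ∈ Finset.range (J+1), n i := this.symm
      _ ≤ max 1 (∑ i ∈ Finset.range (J+1), n i) := le_max_right _ _
  have hNJ1 : 1 ≤ Real.sqrt (N J) := by
    have := Real.sqrt_le_sqrt (show (1:ℝ) ≤ N J from hN1 J)
    rwa [Real.sqrt_one] at this
  calc ∑ j ∈ Finset.Icc 1 J, n j / Real.sqrt (N (j-1))
      ≤ ∑ j ∈ Finset.Icc 1 J,
          ((Real.sqrt 2 + 1) * (Real.sqrt (N j) - Real.sqrt (N (j-1)))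
            + (n j - (N j - N (j-1)))) := by
        refine Finset.sum_le_sum fun j hj => ?_
        obtain ⟨hj1, hj2⟩ := Finset.mem_Icc.1 hj
        exact key j hj1 hj2
    _ = (Real.sqrt 2 + 1) * (Real.sqrt (N J) - Real.sqrt (N 0))
          + ((∑ j ∈ Finset.Icc 1 J, n j) - (N J - N 0)) := by
        rw [Finset.sum_add_distrib, ← Finset.mul_sum,
          tel (fun j => Real.sqrt (N j)), Finset.sum_sub_distrib, tel N]
    _ ≤ (Real.sqrt 2 * (1 + 1 / α) + 1) * Real.sqrt (N J) := by
        rw [hN0, Real.sqrt_one]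
        have h1α : 0 ≤ 1/α := by positivity
        nlinarith [mul_nonneg (mul_nonneg hs2nn h1α) (le_trans zero_le_one hNJ1),
          hsum_n, hNJ1, hs2nn]
end

section
/- Σ_{j=1}^{J} n_j/N_{j−1} ≤ (1 + 1/α) + (1 + 1/α)·log(N_J), where log denotes the natural logarithm. -/
/-!
Track the potential `Φ(T) = min T c + c · log (max 1 T)`, `c = 1 + 1/α`, along the partial sums
`T_j = n_0 + ⋯ + n_j`, so that `N_j = max 1 T_j`. Each term `n_j / N_{j-1}` is at most the increment
`Φ(T_j) - Φ(T_{j-1})`: while `T_{j-1} < 1` the term is `n_j` itself and the partial sums stay below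
`1 + 1/α`, so the `min` pays for it; once `T_{j-1} ≥ 1`, with `x = n_j / T_{j-1} ≤ 1/α` the term is
`x ≤ (1 + x) log (1 + x) ≤ c · (log N_j - log N_{j-1})`. Telescoping from `Φ(0) = 0` and
`Φ(T_J) ≤ c + c log N_J` gives the bound.
-/

open Finset Real

theorem Real.le_one_add_mul_log_one_add {x : ℝ} (hx : 0 ≤ x) :
    x ≤ (1 + x) * log (1 + x) := by
  have hx1 : (0 : ℝ) < 1 + x := by linarith
  calc x = (1 + x) * (1 - (1 + x)⁻¹) := by field_simp; ring
    _ ≤ (1 + x) * log (1 + x) := by gcongr; exact one_sub_inv_le_log_of_pos hx1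

theorem Finset.sum_Icc_one_sub_pred {M : Type*} [AddCommGroup M] (f : ℕ → M) (J : ℕ) :
    ∑ j ∈ Icc 1 J, (f j - f (j - 1)) = f J - f 0 := by
  rw [← Ico_add_one_right_eq_Icc, sum_Ico_eq_sum_range, Nat.add_sub_cancel, ← sum_range_sub]
  simp only [add_comm 1, Nat.add_sub_cancel]

noncomputable def potential (α T : ℝ) : ℝ :=
  min T (1 + 1 / α) + (1 + 1 / α) * log (max 1 T)

theorem potential_zero {α : ℝ} (hα : 0 < α) : potential α 0 = 0 := by
  have hc : (0 : ℝ) ≤ 1 + 1 / α := by positivity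
  simp only [potential, min_eq_left hc, max_eq_left zero_le_one, log_one, mul_zero, add_zero]

theorem potential_le (α T : ℝ) :
    potential α T ≤ (1 + 1 / α) + (1 + 1 / α) * log (max 1 T) := by
  unfold potential
  gcongr
  exact min_le_right _ _

theorem div_max_one_le_potential_add_sub {α T m : ℝ} (hα : 0 < α) (hm : 0 ≤ m)
    (hmT : m ≤ max 1 T / α) :
    m / max 1 T ≤ potential α (T + m) - potential α T := by
  have hc : 1 ≤ 1 + 1 / α := le_add_of_nonneg_right (by positivity)
  rcases lt_or_ge T 1 with hT | hT
  · rw [max_eq_left hT.le] at hmT ⊢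
    have hTm : T + m ≤ 1 + 1 / α := by linarith
    have hlog : 0 ≤ log (max 1 (T + m)) := log_nonneg (le_max_left _ _)
    simp only [potential, min_eq_left hTm, min_eq_left (hT.le.trans hc), max_eq_left hT.le,
      log_one, div_one]
    nlinarith
  · have hT0 : 0 < T := by linarith
    rw [max_eq_right hT] at hmT ⊢
    have hx0 : 0 ≤ m / T := by positivity
    have hxα : m / T ≤ 1 / α := by
      rw [div_le_iff₀ hT0, one_div_mul_eq_div]; exact hmT
    have hlog : log (max 1 (T + m)) - log (max 1 T) = log (1 + m / T) := by
      rw [max_eq_right (by linarith), max_eq_right hT, ← log_div (by linarith) hT0.ne']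
      congr 1
      field_simp
    have hmin : min T (1 + 1 / α) ≤ min (T + m) (1 + 1 / α) := by gcongr; linarith
    calc m / T ≤ (1 + m / T) * log (1 + m / T) := le_one_add_mul_log_one_add hx0
      _ ≤ (1 + 1 / α) * log (1 + m / T) := by gcongr; exact log_nonneg (by linarith)
      _ ≤ potential α (T + m) - potential α T := by
        unfold potential; rw [← hlog]; linarith

theorem stmt_12_general (α : ℝ) (hα : 1 ≤ α) (J : ℕ)
    (n : ℕ → ℝ) (hn0 : n 0 = 0)
    (N : ℕ → ℝ) (hN : ∀ j, N j = max 1 (∑ i ∈ Finset.range (j + 1), n i))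
    (hn : ∀ j, 1 ≤ j → j ≤ J → 0 ≤ n j ∧ n j ≤ N (j - 1) / α) :
    ∑ j ∈ Finset.Icc 1 J, n j / N (j - 1)
      ≤ (1 + 1 / α) + (1 + 1 / α) * Real.log (N J) := by
  have hα0 : 0 < α := by linarith
  set T : ℕ → ℝ := fun k => ∑ i ∈ range (k + 1), n i with hT
  have hstep : ∀ j ∈ Icc 1 J, n j / N (j - 1) ≤ potential α (T j) - potential α (T (j - 1)) := by
    intro j hj
    obtain ⟨k, rfl⟩ : ∃ k, j = k + 1 := ⟨j - 1, by grind⟩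
    obtain ⟨hpos, hle⟩ := hn (k + 1) (by omega) (mem_Icc.mp hj).2
    rw [Nat.add_sub_cancel, hN] at hle ⊢
    have h := div_max_one_le_potential_add_sub hα0 hpos hle
    rwa [← sum_range_succ] at h
  calc ∑ j ∈ Icc 1 J, n j / N (j - 1)
      ≤ ∑ j ∈ Icc 1 J, (potential α (T j) - potential α (T (j - 1))) := sum_le_sum hstep
    _ = potential α (T J) := by
      rw [sum_Icc_one_sub_pred (fun k => potential α (T k))]
      simp [hT, hn0, potential_zero hα0]
    _ ≤ (1 + 1 / α) + (1 + 1 / α) * log (N J) := by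
      rw [hN]; exact potential_le α _

/-- Let `α ≥ 1`, `J ≥ 1`, and let `n_0, …, n_J` be reals with `n_0 = 0` and
`0 ≤ n_j ≤ N_{j−1}/α` for `1 ≤ j ≤ J`, where `N_j = max 1 (∑_{i=0}^{j} n_i)`. Then
`∑_{j=1}^{J} n_j/N_{j−1} ≤ (1 + 1/α) + (1 + 1/α)·log(N_J)`. -/
theorem stmt_12 (α : ℝ) (hα : 1 ≤ α) (J : ℕ) (hJ : 1 ≤ J)
    (n : ℕ → ℝ) (hn0 : n 0 = 0)
    (N : ℕ → ℝ) (hN : ∀ j, N j = max 1 (∑ i ∈ Finset.range (j + 1), n i))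
    (hn : ∀ j, 1 ≤ j → j ≤ J → 0 ≤ n j ∧ n j ≤ N (j - 1) / α) :
    ∑ j ∈ Finset.Icc 1 J, n j / N (j - 1)
      ≤ (1 + 1 / α) + (1 + 1 / α) * Real.log (N J) :=
  stmt_12_general α hα J n hn0 N hN hn
end

section
/- Σ_{x∈X} Σ_{j=1}^{J} n_j(x)/N_{j−1}(x) ≤ (1 + 1/α)·M + (1 + 1/α)·M·log(T/M); moreover, if T/M ≥ e then this quantity is at most 2·(1 + 1/α)·M·log(T/M). -/
/-!
With `S` the running total and `φ S = min 1 S + log (max 1 S)`, a step that adds at most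
`N / α` to a total whose capped value is `N = max 1 S` raises `φ` by at least `1 / (1 + 1/α)` times
its contribution `n / N`: above the cap this is `x ≤ (1 + 1/α) · log (1 + x)` for `x ≤ 1/α`, and
below it the linear part of `φ` pays. Telescoping bounds the inner sum for each `x` by
`(1 + 1/α) · (1 + log N_J(x))`, and concavity of `log` bounds `∑ₓ log N_J(x)` by `M · log (T / M)`.
-/

open Finset Real

lemma sub_one_le_mul_log {y c : ℝ} (hy : 1 ≤ y) (hyc : y ≤ 1 + c) :
    y - 1 ≤ (1 + c) * log y := by
  have hy0 : 0 < y := one_pos.trans_le hy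
  calc y - 1 = y * (1 - y⁻¹) := by field_simp
    _ ≤ (1 + c) * (1 - y⁻¹) := by
      gcongr
      linarith [inv_le_one_of_one_le₀ hy]
    _ ≤ (1 + c) * log y := by
      gcongr
      · linarith
      · exact one_sub_inv_le_log_of_pos hy0

noncomputable def cappedLogPotential (s : ℝ) : ℝ := min 1 s + log (max 1 s)

@[simp]
lemma cappedLogPotential_zero : cappedLogPotential 0 = 0 := by simp [cappedLogPotential]

lemma cappedLogPotential_le (s : ℝ) : cappedLogPotential s ≤ 1 + log (max 1 s) := by
  unfold cappedLogPotential
  linarith [min_le_left 1 s]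

lemma div_max_one_le_cappedLogPotential_sub {s a c : ℝ} (ha : 0 ≤ a) (hac : a ≤ c * max 1 s) :
    a / max 1 s ≤ (1 + c) * (cappedLogPotential (s + a) - cappedLogPotential s) := by
  unfold cappedLogPotential
  rcases le_or_gt 1 s with hs | hs
  · have hs0 : 0 < s := one_pos.trans_le hs
    rw [max_eq_right hs] at hac ⊢
    rw [max_eq_right (by linarith), min_eq_left hs, min_eq_left (by linarith)]
    have key := sub_one_le_mul_log (y := (s + a) / s) (c := c)
      ((le_div_iff₀ hs0).2 (by linarith)) ((div_le_iff₀ hs0).2 (by linarith))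
    have hdiv : (s + a) / s - 1 = a / s := by field_simp; ring
    rw [log_div (by linarith) hs0.ne', hdiv] at key
    linarith
  · have hc : 0 ≤ c := by
      rw [max_eq_left hs.le] at hac
      linarith
    rw [max_eq_left hs.le] at hac ⊢
    rw [min_eq_right hs.le, log_one, div_one]
    rcases le_or_gt (s + a) 1 with hsa | hsa
    · rw [min_eq_right hsa, max_eq_left hsa, log_one]
      nlinarith
    · rw [min_eq_left hsa.le, max_eq_right hsa.le]
      -- `a = (1 - s) + (s + a - 1)`, and `s + a ≤ 1 + c` because `s < 1`
      have key := sub_one_le_mul_log (c := c) hsa.le (by linarith)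
      nlinarith

lemma sum_div_max_one_partial_sum_le {c : ℝ} (m : ℕ → ℝ) (J : ℕ)
    (hm : ∀ j ∈ Icc 1 J, 0 ≤ m j ∧ m j ≤ c * max 1 (∑ i ∈ range j, m i)) :
    ∑ j ∈ Icc 1 J, m j / max 1 (∑ i ∈ range j, m i)
      ≤ (1 + c) * (cappedLogPotential (∑ i ∈ range (J + 1), m i) - cappedLogPotential (m 0)) := by
  induction J with
  | zero => simp
  | succ J ih =>
    have ih := ih fun j hj => hm j (Icc_subset_Icc_right J.le_succ hj)
    obtain ⟨hm₀, hm₁⟩ := hm (J + 1) (right_mem_Icc.2 (by omega))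
    have step := div_max_one_le_cappedLogPotential_sub hm₀ hm₁
    rw [sum_Icc_succ_top (by omega), sum_range_succ _ (J + 1)]
    linarith

lemma sum_log_le_card_mul_log_div {ι : Type*} {s : Finset ι} (hs : s.Nonempty) {p : ι → ℝ}
    (hp : ∀ i ∈ s, 0 < p i) {T : ℝ} (hT : ∑ i ∈ s, p i ≤ T) :
    ∑ i ∈ s, log (p i) ≤ #s * log (T / #s) := by
  have hk : (0 : ℝ) < #s := by exact_mod_cast hs.card_pos
  have jensen := strictConcaveOn_log_Ioi.concaveOn.le_map_sum (t := s) (w := fun _ => (#s : ℝ)⁻¹)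
    (p := p) (fun _ _ => by positivity) (by simp [hk.ne']) hp
  simp only [smul_eq_mul, ← mul_sum] at jensen
  have mean_le : log ((#s : ℝ)⁻¹ * ∑ i ∈ s, p i) ≤ log (T / #s) := by
    apply log_le_log (mul_pos (inv_pos.2 hk) (sum_pos hp hs))
    rw [div_eq_inv_mul]
    gcongr
  calc ∑ i ∈ s, log (p i) = #s * ((#s : ℝ)⁻¹ * ∑ i ∈ s, log (p i)) := by field_simp
    _ ≤ #s * log (T / #s) := by gcongr; exact jensen.trans mean_le

theorem stmt_14_general {X : Type*} [Fintype X] [Nonempty X] (M : ℕ) (hM : Fintype.card X = M)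
    (α : ℝ) (hα : 1 ≤ α) (J : ℕ)
    (n : X → ℕ → ℝ) (hn0 : ∀ x, n x 0 = 0)
    (N : X → ℕ → ℝ) (hN : ∀ x j, N x j = max 1 (∑ i ∈ Finset.range (j + 1), n x i))
    (hn : ∀ x j, 1 ≤ j → j ≤ J → 0 ≤ n x j ∧ n x j ≤ N x (j - 1) / α)
    (T : ℝ) (hT : ∑ x, N x J ≤ T) :
    (∑ x, ∑ j ∈ Finset.Icc 1 J, n x j / N x (j - 1))
        ≤ (1 + 1 / α) * M + (1 + 1 / α) * M * Real.log (T / M)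
      ∧ (Real.exp 1 ≤ T / M →
          (∑ x, ∑ j ∈ Finset.Icc 1 J, n x j / N x (j - 1))
            ≤ 2 * (1 + 1 / α) * M * Real.log (T / M)) := by
  have hC : 0 ≤ 1 + 1 / α := by positivity
  have hM0 : (0 : ℝ) < M := by rw [← hM]; exact_mod_cast Fintype.card_pos
  have hN_pred : ∀ x j, 1 ≤ j → N x (j - 1) = max 1 (∑ i ∈ range j, n x i) := fun x j hj => by
    rw [hN, Nat.sub_add_cancel hj]
  have per_x : ∀ x, ∑ j ∈ Icc 1 J, n x j / N x (j - 1) ≤ (1 + 1 / α) * (1 + log (N x J)) := by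
    intro x
    rw [sum_congr rfl fun j hj => by rw [hN_pred x j (mem_Icc.1 hj).1]]
    have tele := sum_div_max_one_partial_sum_le (c := 1 / α) (n x) J fun j hj => by
      obtain ⟨h₀, h₁⟩ := hn x j (mem_Icc.1 hj).1 (mem_Icc.1 hj).2
      rw [hN_pred x j (mem_Icc.1 hj).1] at h₁
      exact ⟨h₀, by rwa [one_div_mul_eq_div]⟩
    rw [hn0, cappedLogPotential_zero, sub_zero] at tele
    rw [hN]
    exact tele.trans (by gcongr; exact cappedLogPotential_le _)
  have sum_log := sum_log_le_card_mul_log_div univ_nonempty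
    (fun x _ => one_pos.trans_le ((hN x J).symm ▸ le_max_left _ _)) hT
  rw [card_univ, hM] at sum_log
  have main : ∑ x, ∑ j ∈ Icc 1 J, n x j / N x (j - 1)
      ≤ (1 + 1 / α) * M + (1 + 1 / α) * M * log (T / M) :=
    calc _ ≤ ∑ x, (1 + 1 / α) * (1 + log (N x J)) := sum_le_sum fun x _ => per_x x
      _ = (1 + 1 / α) * (M + ∑ x, log (N x J)) := by
        rw [← mul_sum, sum_add_distrib, sum_const, card_univ, hM, nsmul_one]
      _ ≤ (1 + 1 / α) * (M + M * log (T / M)) := by gcongr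
      _ = _ := by ring
  refine ⟨main, fun hE => ?_⟩
  have hlog : 1 ≤ log (T / M) := by simpa using log_le_log (exp_pos 1) hE
  linarith [mul_le_mul_of_nonneg_left hlog (mul_nonneg hC hM0.le)]

/-- Let `α ≥ 1`, `X` finite nonempty with `|X| = M`, `J ≥ 1`. For each `x ∈ X` let
`n_0(x), …, n_J(x)` be reals with `n_0(x) = 0` and `0 ≤ n_j(x) ≤ N_{j−1}(x)/α` for `1 ≤ j ≤ J`,
where `N_j(x) = max 1 (∑_{i=0}^{j} n_i(x))`, and let `T` satisfy `∑_x N_J(x) ≤ T`. Then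
`∑_{x} ∑_{j=1}^{J} n_j(x)/N_{j−1}(x) ≤ (1 + 1/α)·M + (1 + 1/α)·M·log(T/M)`; moreover if
`T/M ≥ e` this is at most `2·(1 + 1/α)·M·log(T/M)`. -/
theorem stmt_14 {X : Type*} [Fintype X] [Nonempty X] (M : ℕ) (hM : Fintype.card X = M)
    (α : ℝ) (hα : 1 ≤ α) (J : ℕ) (hJ : 1 ≤ J)
    (n : X → ℕ → ℝ) (hn0 : ∀ x, n x 0 = 0)
    (N : X → ℕ → ℝ) (hN : ∀ x j, N x j = max 1 (∑ i ∈ Finset.range (j + 1), n x i))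
    (hn : ∀ x j, 1 ≤ j → j ≤ J → 0 ≤ n x j ∧ n x j ≤ N x (j - 1) / α)
    (T : ℝ) (hT : ∑ x, N x J ≤ T) :
    (∑ x, ∑ j ∈ Finset.Icc 1 J, n x j / N x (j - 1))
        ≤ (1 + 1 / α) * M + (1 + 1 / α) * M * Real.log (T / M)
      ∧ (Real.exp 1 ≤ T / M →
          (∑ x, ∑ j ∈ Finset.Icc 1 J, n x j / N x (j - 1))
            ≤ 2 * (1 + 1 / α) * M * Real.log (T / M)) :=
  stmt_14_general M hM α hα J n hn0 N hN hn T hT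
end
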